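/- arXiv:1109.3983 — 3 statements merged into one kernel-verified Lean document; each statement's English description precedes it below -/
import Mathlib

section
/- Let φ : ℝⁿ → ℝ be smooth. Then for every smooth super form α on ℝⁿ (flat ℝ-Kähler metric ω = Σ dx_i∧dξ_i) the Bochner–Kodaira–Nakano type identity holds: d((Λd#_φ − d#_φΛ)α) + (Λd#_φ − d#_φΛ)(dα) + d#_φ((Λd − dΛ)α) + (Λd − dΛ)(d#_φα) = dd#φ ∧ (Λα) − Λ(dd#φ ∧ α); that is, □_φ = □#_φ + [dd#φ, Λ], where □_φ = d[Λ,d#_φ] + [Λ,d#_φ]d and □#_φ = −(d#_φ[Λ,d] + [Λ,d]d#_φ). -/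
open scoped BigOperators

noncomputable section

/-- The exterior algebra `⋀(ℝ^{2n})`, represented concretely: an element is given by its
coordinates in the basis of wedge monomials indexed by subsets of `Fin (2*n)`
(the first `n` basis indices correspond to `dx_1, …, dx_n`, the last `n` to `dξ_1, …, dξ_n`). -/
abbrev SForm (n : ℕ) := Finset (Fin (2 * n)) → ℝ

/-- The inner product making the wedge monomials an orthonormal basis. -/
def sip {n : ℕ} (x y : SForm n) : ℝ := ∑ s : Finset (Fin (2 * n)), x s * y s

/-- The wedge product, written in coordinates over the monomial basis; the sign
counts the inversions between the two index sets. -/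
def wedge {n : ℕ} (x y : SForm n) : SForm n := fun s =>
  ∑ a ∈ s.powerset,
    (-1 : ℝ) ^ (((a ×ˢ (s \ a)).filter fun q => q.2 < q.1).card) * x a * y (s \ a)

/-- `x` is a `k`-form: it is supported on monomials of degree `k`. -/
def IsForm {n : ℕ} (k : ℕ) (x : SForm n) : Prop := ∀ s, x s ≠ 0 → s.card = k

/-- Index of `dx_i` among the `2n` basis vectors. -/
def dxI (n : ℕ) (i : Fin n) : Fin (2 * n) := ⟨i.1, by have := i.2; omega⟩

/-- Index of `dξ_i` among the `2n` basis vectors. -/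
def dxiI (n : ℕ) (i : Fin n) : Fin (2 * n) := ⟨n + i.1, by have := i.2; omega⟩

/-- The basic one-form `dx_i`. -/
def sDx (n : ℕ) (i : Fin n) : SForm n := fun s => if s = {dxI n i} then 1 else 0

/-- The basic one-form `dξ_i`. -/
def sDxi (n : ℕ) (i : Fin n) : SForm n := fun s => if s = {dxiI n i} then 1 else 0

/-- The unit `1` of the exterior algebra. -/
def sOne (n : ℕ) : SForm n := fun s => if s = ∅ then 1 else 0

/-- The standard Kähler form `ω = Σ_i dx_i ∧ dξ_i`. -/
def omegaF (n : ℕ) : SForm n := ∑ i : Fin n, wedge (sDx n i) (sDxi n i)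

/-- The Lefschetz operator `L = ω ∧ ·`. -/
def Lop (n : ℕ) (x : SForm n) : SForm n := wedge (omegaF n) x

/-- The iterate `L^m`. -/
def Lpow (n : ℕ) (m : ℕ) (x : SForm n) : SForm n := (Lop n)^[m] x

/-- The power `ω^m`. -/
def omegaPow (n : ℕ) (m : ℕ) : SForm n := Lpow n m (sOne n)

/-- `ω_n = ω^n / n!`, the volume form. -/
def omegaTop (n : ℕ) : SForm n := ((n.factorial : ℝ))⁻¹ • omegaPow n n

/-- The super-differential `dα = Σ_i dx_i ∧ ∂α/∂x_i` of a super form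
`α : ℝⁿ → ⋀(ℝ^{2n})`. -/
def dS (n : ℕ) (α : (Fin n → ℝ) → SForm n) : (Fin n → ℝ) → SForm n :=
  fun x => ∑ i : Fin n, wedge (sDx n i) (fderiv ℝ α x (Pi.single i 1))

/-- The super-differential `d#α = Σ_i dξ_i ∧ ∂α/∂x_i` of a super form. -/
def dSh (n : ℕ) (α : (Fin n → ℝ) → SForm n) : (Fin n → ℝ) → SForm n :=
  fun x => ∑ i : Fin n, wedge (sDxi n i) (fderiv ℝ α x (Pi.single i 1))

/-- `d#φ = Σ_i (∂φ/∂x_i) dξ_i` for a function `φ : ℝⁿ → ℝ`. -/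
def dShFun (n : ℕ) (φ : (Fin n → ℝ) → ℝ) : (Fin n → ℝ) → SForm n :=
  fun x => ∑ i : Fin n, (fderiv ℝ φ x (Pi.single i 1)) • sDxi n i

/-- The twisted differential `d#_φ α = d#α − d#φ ∧ α`. -/
def dShPhi (n : ℕ) (φ : (Fin n → ℝ) → ℝ) (α : (Fin n → ℝ) → SForm n) :
    (Fin n → ℝ) → SForm n :=
  fun x => dSh n α x - wedge (dShFun n φ x) (α x)

/-- `dd#φ = Σ_{i,j} (∂²φ/∂x_i∂x_j) dx_i ∧ dξ_j`. -/
def ddShFun (n : ℕ) (φ : (Fin n → ℝ) → ℝ) : (Fin n → ℝ) → SForm n :=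
  fun x => ∑ i : Fin n, ∑ j : Fin n,
    (fderiv ℝ (fun y => fderiv ℝ φ y (Pi.single j 1)) x (Pi.single i 1))
      • wedge (sDx n i) (sDxi n j)
namespace BKN

variable {n : ℕ}

/-- Sign: number of elements of `s` smaller than `t`. -/
def sgn (t : Fin (2*n)) (s : Finset (Fin (2*n))) : ℝ := (-1) ^ (s.filter (· < t)).card

/-- Left wedge by the basis covector `t`. -/
def mulE (t : Fin (2*n)) (x : SForm n) : SForm n :=
  fun s => if t ∈ s then sgn t s * x (s.erase t) else 0

/-- Contraction by basis covector `t` (adjoint of `mulE t`). -/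
def cE (t : Fin (2*n)) (x : SForm n) : SForm n :=
  fun s => if t ∈ s then 0 else sgn t s * x (insert t s)

lemma sgn_insert {t u : Fin (2*n)} {s : Finset (Fin (2*n))} (h : t ∉ s) :
    sgn u (insert t s) = (if t < u then (-1:ℝ) else 1) * sgn u s := by
  unfold sgn
  rw [Finset.filter_insert]
  split_ifs with h1
  · rw [Finset.card_insert_of_notMem (fun hc => h (Finset.mem_filter.1 hc).1), pow_succ]
    ring
  · ring

lemma sgn_erase {t u : Fin (2*n)} {s : Finset (Fin (2*n))} (h : t ∈ s) :
    sgn u (s.erase t) = (if t < u then (-1:ℝ) else 1) * sgn u s := by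
  have h2 := sgn_insert (t := t) (u := u) (s := s.erase t) (Finset.notMem_erase t s)
  rw [Finset.insert_erase h] at h2
  rw [h2]
  split_ifs <;> ring

lemma sgn_insert_self {t : Fin (2*n)} {s : Finset (Fin (2*n))} :
    sgn t (insert t s) = sgn t s := by
  unfold sgn
  rw [Finset.filter_insert, if_neg (lt_irrefl t)]

lemma sgn_erase_self {t : Fin (2*n)} {s : Finset (Fin (2*n))} :
    sgn t (s.erase t) = sgn t s := by
  unfold sgn
  rw [Finset.filter_erase, Finset.erase_eq_of_notMem]
  intro hc
  exact lt_irrefl t (Finset.mem_filter.1 hc).2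

lemma sgn_mul_self (t : Fin (2*n)) (s : Finset (Fin (2*n))) : sgn t s * sgn t s = 1 := by
  unfold sgn
  rw [← pow_add]
  exact Even.neg_one_pow ⟨_, rfl⟩

/-- The canonical anticommutation relation. -/
lemma CAR (t u : Fin (2*n)) (x : SForm n) :
    mulE t (cE u x) + cE u (mulE t x) = if t = u then x else 0 := by
  by_cases htu : t = u
  · subst htu
    rw [if_pos rfl]
    funext s
    simp only [Pi.add_apply, mulE, cE]
    by_cases hts : t ∈ s
    · rw [if_pos hts, if_pos hts, if_neg (Finset.notMem_erase t s), Finset.insert_erase hts,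
        sgn_erase_self, add_zero, ← mul_assoc, sgn_mul_self, one_mul]
    · rw [if_neg hts, if_neg hts, if_pos (Finset.mem_insert_self t s), Finset.erase_insert hts,
        sgn_insert_self, zero_add, ← mul_assoc, sgn_mul_self, one_mul]
  · rw [if_neg htu]
    funext s
    simp only [Pi.add_apply, mulE, cE, Pi.zero_apply]
    by_cases hts : t ∈ s <;> by_cases hus : u ∈ s
    · rw [if_pos hts, if_pos (Finset.mem_erase.2 ⟨Ne.symm htu, hus⟩), if_pos hus,
        mul_zero, add_zero]
    · rw [if_pos hts, if_neg (fun hc => hus (Finset.mem_erase.1 hc).2), if_neg hus,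
        if_pos (Finset.mem_insert_of_mem hts)]
      have hset : insert u (s.erase t) = (insert u s).erase t := by
        ext a
        simp only [Finset.mem_insert, Finset.mem_erase]
        constructor
        · rintro (rfl | ⟨h1, h2⟩)
          · exact ⟨Ne.symm htu, Or.inl rfl⟩
          · exact ⟨h1, Or.inr h2⟩
        · rintro ⟨h1, (rfl | h2)⟩
          · exact Or.inl rfl
          · exact Or.inr ⟨h1, h2⟩
      rw [hset, sgn_erase (u := u) hts, sgn_insert (t := u) (u := t) hus]
      rcases lt_or_gt_of_ne (fun hc : t = u => htu hc) with h | h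
      · rw [if_pos h, if_neg (not_lt.2 h.le)]
        ring
      · rw [if_neg (not_lt.2 h.le), if_pos h]
        ring
    · have hti : t ∉ insert u s := by
        simp only [Finset.mem_insert]
        rintro (rfl | hc)
        · exact htu rfl
        · exact hts hc
      rw [if_neg hts, if_pos hus, zero_add]
    · have hti : t ∉ insert u s := by
        simp only [Finset.mem_insert]
        rintro (rfl | hc)
        · exact htu rfl
        · exact hts hc
      rw [if_neg hts, if_neg hus, if_neg hti, zero_add, mul_zero]

end BKN
namespace BKN
variable {n : ℕ}

lemma mulE_add (t : Fin (2*n)) (x y : SForm n) :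
    mulE t (x + y) = mulE t x + mulE t y := by
  funext s
  simp only [mulE, Pi.add_apply]
  split_ifs <;> ring

lemma mulE_smul (t : Fin (2*n)) (c : ℝ) (x : SForm n) :
    mulE t (c • x) = c • mulE t x := by
  funext s
  simp only [mulE, Pi.smul_apply, smul_eq_mul]
  split_ifs <;> ring

lemma cE_add (t : Fin (2*n)) (x y : SForm n) :
    cE t (x + y) = cE t x + cE t y := by
  funext s
  simp only [cE, Pi.add_apply]
  split_ifs <;> ring

lemma cE_smul (t : Fin (2*n)) (c : ℝ) (x : SForm n) :
    cE t (c • x) = c • cE t x := by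
  funext s
  simp only [cE, Pi.smul_apply, smul_eq_mul]
  split_ifs <;> ring

/-- `mulE` as a linear map. -/
def mulEL (t : Fin (2*n)) : SForm n →ₗ[ℝ] SForm n where
  toFun := mulE t
  map_add' := mulE_add t
  map_smul' := mulE_smul t

/-- `cE` as a linear map. -/
def cEL (t : Fin (2*n)) : SForm n →ₗ[ℝ] SForm n where
  toFun := cE t
  map_add' := cE_add t
  map_smul' := cE_smul t

lemma mulE_sum {ι : Type*} (t : Fin (2*n)) (F : Finset ι) (f : ι → SForm n) :
    mulE t (∑ i ∈ F, f i) = ∑ i ∈ F, mulE t (f i) := map_sum (mulEL t) f F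

lemma cE_sum {ι : Type*} (t : Fin (2*n)) (F : Finset ι) (f : ι → SForm n) :
    cE t (∑ i ∈ F, f i) = ∑ i ∈ F, cE t (f i) := map_sum (cEL t) f F

lemma cE_neg (t : Fin (2*n)) (x : SForm n) : cE t (-x) = -cE t x :=
  map_neg (cEL t) x

lemma mulE_sub (t : Fin (2*n)) (x y : SForm n) : mulE t (x - y) = mulE t x - mulE t y :=
  map_sub (mulEL t) x y

lemma cE_sub (t : Fin (2*n)) (x y : SForm n) : cE t (x - y) = cE t x - cE t y :=
  map_sub (cEL t) x y

lemma card_filter_product (A B : Finset (Fin (2*n))) :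
    ((A ×ˢ B).filter fun q => q.2 < q.1).card = ∑ a ∈ A, (B.filter (· < a)).card := by
  rw [Finset.card_filter, Finset.sum_product]
  exact Finset.sum_congr rfl fun a _ => (Finset.card_filter _ _).symm

/-- Wedging with a singleton indicator is `mulE`. -/
lemma wedge_ind (t : Fin (2*n)) (x : SForm n) :
    wedge (fun s => if s = ({t} : Finset (Fin (2*n))) then (1:ℝ) else 0) x = mulE t x := by
  funext s
  unfold wedge
  dsimp only
  have hcongr : ∀ a ∈ s.powerset,
      (-1:ℝ) ^ (((a ×ˢ (s \ a)).filter fun q => q.2 < q.1).card)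
        * (if a = ({t} : Finset (Fin (2*n))) then (1:ℝ) else 0) * x (s \ a)
      = if a = ({t} : Finset (Fin (2*n))) then
          (-1:ℝ) ^ ((( ({t} : Finset (Fin (2*n))) ×ˢ (s \ {t})).filter fun q => q.2 < q.1).card)
            * x (s \ {t}) else 0 := by
    intro a _
    by_cases h : a = ({t} : Finset (Fin (2*n)))
    · subst h; rw [if_pos rfl, if_pos rfl]; ring
    · rw [if_neg h, if_neg h, mul_zero, zero_mul]
  rw [Finset.sum_congr rfl hcongr, Finset.sum_ite_eq' s.powerset]
  unfold mulE
  by_cases hts : t ∈ s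
  · have hnm : t ∉ s.filter (· < t) := fun hc => lt_irrefl t (Finset.mem_filter.1 hc).2
    rw [if_pos (Finset.mem_powerset.2 (Finset.singleton_subset_iff.2 hts)), if_pos hts,
      card_filter_product, Finset.sum_singleton, Finset.sdiff_singleton_eq_erase,
      Finset.filter_erase, Finset.erase_eq_of_notMem hnm]
    rfl
  · rw [if_neg (fun hc => hts (Finset.singleton_subset_iff.1 (Finset.mem_powerset.1 hc))),
      if_neg hts]

/-- Wedging with a two-element indicator, `t < u`. -/
lemma wedge_pair {t u : Fin (2*n)} (htu : t < u) (x : SForm n) :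
    wedge (fun s => if s = ({t, u} : Finset (Fin (2*n))) then (1:ℝ) else 0) x
      = mulE t (mulE u x) := by
  have hne : t ≠ u := ne_of_lt htu
  funext s
  unfold wedge
  dsimp only
  have hcongr : ∀ a ∈ s.powerset,
      (-1:ℝ) ^ (((a ×ˢ (s \ a)).filter fun q => q.2 < q.1).card)
        * (if a = ({t, u} : Finset (Fin (2*n))) then (1:ℝ) else 0) * x (s \ a)
      = if a = ({t, u} : Finset (Fin (2*n))) then
          (-1:ℝ) ^ ((( ({t, u} : Finset (Fin (2*n))) ×ˢ (s \ {t, u})).filter fun q => q.2 < q.1).card)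
            * x (s \ {t, u}) else 0 := by
    intro a _
    by_cases h : a = ({t, u} : Finset (Fin (2*n)))
    · subst h; rw [if_pos rfl, if_pos rfl]; ring
    · rw [if_neg h, if_neg h, mul_zero, zero_mul]
  rw [Finset.sum_congr rfl hcongr, Finset.sum_ite_eq' s.powerset]
  have hsd : s \ {t, u} = (s.erase t).erase u := by
    ext a
    simp only [Finset.mem_sdiff, Finset.mem_insert, Finset.mem_singleton, Finset.mem_erase]
    constructor
    · rintro ⟨h1, h2⟩
      exact ⟨fun hc => h2 (Or.inr hc), fun hc => h2 (Or.inl hc), h1⟩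
    · rintro ⟨h1, h2, h3⟩
      exact ⟨h3, by rintro (rfl | rfl) <;> simp_all⟩
  unfold mulE
  by_cases hts : t ∈ s <;> by_cases hus : u ∈ s
  · have hsub : ({t, u} : Finset (Fin (2*n))) ⊆ s := by
      rw [Finset.insert_subset_iff, Finset.singleton_subset_iff]; exact ⟨hts, hus⟩
    rw [if_pos (Finset.mem_powerset.2 hsub), if_pos hts,
      if_pos (Finset.mem_erase.2 ⟨Ne.symm hne, hus⟩)]
    rw [card_filter_product, Finset.sum_pair hne, hsd]
    have hnm1 : t ∉ s.filter (· < t) := fun hc => lt_irrefl t (Finset.mem_filter.1 hc).2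
    have hnm1' : u ∉ (s.filter (· < t)).erase t :=
      fun hc => absurd (Finset.mem_filter.1 (Finset.mem_erase.1 hc).2).2 (not_lt.2 htu.le)
    have e1 : (((s.erase t).erase u).filter (· < t)).card = (s.filter (· < t)).card := by
      rw [Finset.filter_erase, Finset.filter_erase, Finset.erase_eq_of_notMem hnm1',
        Finset.erase_eq_of_notMem hnm1]
    have hnm2 : u ∉ (s.erase t).filter (· < u) := fun hc => lt_irrefl u (Finset.mem_filter.1 hc).2
    have e2 : (((s.erase t).erase u).filter (· < u)).card = ((s.erase t).filter (· < u)).card := by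
      rw [Finset.filter_erase (p := fun x => x < u) u ((s.erase t)), Finset.erase_eq_of_notMem hnm2]
    rw [e1, e2, pow_add]
    unfold sgn
    ring
  · have hsub : ¬ ({t, u} : Finset (Fin (2*n))) ⊆ s := fun hc => hus (hc (by simp))
    rw [if_neg (fun hc => hsub (Finset.mem_powerset.1 hc)), if_pos hts,
      if_neg (fun hc => hus (Finset.mem_erase.1 hc).2), mul_zero]
  · have hsub : ¬ ({t, u} : Finset (Fin (2*n))) ⊆ s := fun hc => hts (hc (by simp))
    rw [if_neg (fun hc => hsub (Finset.mem_powerset.1 hc)), if_neg hts]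
  · have hsub : ¬ ({t, u} : Finset (Fin (2*n))) ⊆ s := fun hc => hts (hc (by simp))
    rw [if_neg (fun hc => hsub (Finset.mem_powerset.1 hc)), if_neg hts]

lemma wedge_sum_left {ι : Type*} (F : Finset ι) (f : ι → SForm n) (x : SForm n) :
    wedge (∑ i ∈ F, f i) x = ∑ i ∈ F, wedge (f i) x := by
  funext s
  simp only [wedge, Finset.sum_apply, Finset.sum_mul, Finset.mul_sum]
  rw [Finset.sum_comm]

lemma wedge_smul_left (c : ℝ) (y x : SForm n) :
    wedge (c • y) x = c • wedge y x := by
  funext s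
  simp only [wedge, Pi.smul_apply, smul_eq_mul, Finset.mul_sum]
  exact Finset.sum_congr rfl fun a _ => by ring

end BKN
namespace BKN
variable {n : ℕ}

lemma dxI_lt_dxiI (i j : Fin n) : dxI n i < dxiI n j := by
  simp only [dxI, dxiI, Fin.lt_def]
  omega

lemma dxI_ne_dxiI (i j : Fin n) : dxI n i ≠ dxiI n j := ne_of_lt (dxI_lt_dxiI i j)

lemma dxiI_ne_dxI (i j : Fin n) : dxiI n i ≠ dxI n j := (dxI_ne_dxiI j i).symm

lemma dxI_inj {i j : Fin n} (h : dxI n i = dxI n j) : i = j := by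
  simpa [dxI, Fin.ext_iff] using h

lemma dxiI_inj {i j : Fin n} (h : dxiI n i = dxiI n j) : i = j := by
  simp only [dxiI, Fin.ext_iff] at h
  exact Fin.ext (by omega)

lemma wedge_sDx (i : Fin n) (x : SForm n) : wedge (sDx n i) x = mulE (dxI n i) x :=
  wedge_ind (dxI n i) x

lemma wedge_sDxi (i : Fin n) (x : SForm n) : wedge (sDxi n i) x = mulE (dxiI n i) x :=
  wedge_ind (dxiI n i) x

lemma wedge_dx_dxi (i j : Fin n) :
    wedge (sDx n i) (sDxi n j)
      = fun s => if s = ({dxI n i, dxiI n j} : Finset (Fin (2*n))) then (1:ℝ) else 0 := by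
  rw [wedge_sDx]
  funext s
  have htu : dxI n i < dxiI n j := dxI_lt_dxiI i j
  have hne : dxI n i ≠ dxiI n j := ne_of_lt htu
  simp only [mulE, sDxi]
  by_cases hs : s = ({dxI n i, dxiI n j} : Finset (Fin (2*n)))
  · subst hs
    have hts : dxI n i ∈ ({dxI n i, dxiI n j} : Finset (Fin (2*n))) := by simp
    have herase : ({dxI n i, dxiI n j} : Finset (Fin (2*n))).erase (dxI n i)
        = {dxiI n j} := Finset.erase_insert (by simp [hne])
    have hsgn : sgn (dxI n i) ({dxI n i, dxiI n j} : Finset (Fin (2*n))) = 1 := by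
      unfold sgn
      rw [Finset.filter_insert, if_neg (lt_irrefl _), Finset.filter_singleton,
        if_neg (not_lt.2 htu.le)]
      simp
    simp [hts, herase, hsgn]
  · rw [if_neg hs]
    by_cases hts : dxI n i ∈ s
    · have : s.erase (dxI n i) ≠ ({dxiI n j} : Finset (Fin (2*n))) := by
        intro hc
        apply hs
        rw [← Finset.insert_erase hts, hc]
      rw [if_pos hts, if_neg this, mul_zero]
    · rw [if_neg hts]

/-- The Lefschetz operator in terms of `mulE`. -/
lemma Lop_eq (x : SForm n) :
    Lop n x = ∑ k : Fin n, mulE (dxI n k) (mulE (dxiI n k) x) := by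
  unfold Lop omegaF
  rw [wedge_sum_left]
  exact Finset.sum_congr rfl fun k _ => by
    rw [wedge_dx_dxi k k, wedge_pair (dxI_lt_dxiI k k)]

/-- The explicit formula for the adjoint of `L`. -/
def Lam0 : SForm n → SForm n := fun x => ∑ k : Fin n, cE (dxiI n k) (cE (dxI n k) x)

lemma sip_comm (x y : SForm n) : sip x y = sip y x := by
  unfold sip
  exact Finset.sum_congr rfl fun s _ => mul_comm _ _

lemma sip_sum_left {ι : Type*} (F : Finset ι) (f : ι → SForm n) (y : SForm n) :
    sip (∑ i ∈ F, f i) y = ∑ i ∈ F, sip (f i) y := by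
  unfold sip
  simp only [Finset.sum_apply, Finset.sum_mul]
  rw [Finset.sum_comm]

lemma sip_mulE (t : Fin (2*n)) (x y : SForm n) : sip (mulE t x) y = sip x (cE t y) := by
  unfold sip mulE cE
  have h1 : ∀ s : Finset (Fin (2*n)),
      (if t ∈ s then sgn t s * x (s.erase t) else 0) * y s
      = if t ∈ s then sgn t s * x (s.erase t) * y s else 0 := by
    intro s; split_ifs <;> ring
  have h2 : ∀ s : Finset (Fin (2*n)),
      x s * (if t ∈ s then 0 else sgn t s * y (insert t s))
      = if t ∉ s then sgn t s * x s * y (insert t s) else 0 := by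
    intro s
    by_cases h : t ∈ s
    · rw [if_pos h, if_neg (not_not.2 h), mul_zero]
    · rw [if_neg h, if_pos h]; ring
  rw [Finset.sum_congr rfl fun s _ => h1 s, Finset.sum_congr rfl fun s _ => h2 s,
    Finset.sum_ite, Finset.sum_const_zero, add_zero,
    Finset.sum_ite, Finset.sum_const_zero, add_zero]
  refine Finset.sum_bij' (fun s _ => s.erase t) (fun s _ => insert t s) ?_ ?_ ?_ ?_ ?_
  · intro s hs
    simp only [Finset.mem_filter, Finset.mem_univ, true_and] at hs ⊢
    exact Finset.notMem_erase t s
  · intro s hs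
    simp only [Finset.mem_filter, Finset.mem_univ, true_and] at hs ⊢
    exact Finset.mem_insert_self t s
  · intro s hs
    simp only [Finset.mem_filter, Finset.mem_univ, true_and] at hs
    exact Finset.insert_erase hs
  · intro s hs
    simp only [Finset.mem_filter, Finset.mem_univ, true_and] at hs
    exact Finset.erase_insert hs
  · intro s hs
    simp only [Finset.mem_filter, Finset.mem_univ, true_and] at hs
    rw [sgn_erase_self (s := s), Finset.insert_erase hs]

lemma sip_Lop (x y : SForm n) : sip (Lop n x) y = sip x (Lam0 y) := by
  rw [Lop_eq, sip_sum_left]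
  unfold Lam0
  rw [show sip x (∑ k : Fin n, cE (dxiI n k) (cE (dxI n k) y))
      = ∑ k : Fin n, sip x (cE (dxiI n k) (cE (dxI n k) y)) by
    rw [sip_comm, sip_sum_left]
    exact Finset.sum_congr rfl fun k _ => sip_comm _ _]
  exact Finset.sum_congr rfl fun k _ => by rw [sip_mulE, sip_mulE]

lemma sip_delta (s : Finset (Fin (2*n))) (w : SForm n) :
    sip (fun s' => if s' = s then (1:ℝ) else 0) w = w s := by
  unfold sip
  rw [Finset.sum_congr rfl (fun s' _ => ?_)
    (g := fun s' => if s' = s then w s' else 0), Finset.sum_ite_eq' Finset.univ s w,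
    if_pos (Finset.mem_univ s)]
  dsimp only
  split_ifs <;> ring

/-- The adjoint is unique: `Lam` agrees with the explicit formula. -/
lemma Lam_eq_Lam0 (Lam : SForm n →ₗ[ℝ] SForm n)
    (hLam : ∀ x y : SForm n, sip (Lop n x) y = sip x (Lam y)) (z : SForm n) :
    Lam z = Lam0 z := by
  funext s
  have h1 := hLam (fun s' => if s' = s then (1:ℝ) else 0) z
  have h2 := sip_Lop (n := n) (fun s' => if s' = s then (1:ℝ) else 0) z
  rw [h1] at h2
  rw [sip_delta, sip_delta] at h2
  exact h2

end BKN
namespace BKN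
variable {n : ℕ}

lemma cE_mulE (t u : Fin (2*n)) (x : SForm n) :
    cE u (mulE t x) = (if t = u then x else 0) - mulE t (cE u x) :=
  eq_sub_of_add_eq' (CAR t u x)

lemma cE_mulE_ne {t u : Fin (2*n)} (h : t ≠ u) (x : SForm n) :
    cE u (mulE t x) = - mulE t (cE u x) := by
  rw [cE_mulE, if_neg h, zero_sub]

lemma cE_mulE_eq (t : Fin (2*n)) (x : SForm n) :
    cE t (mulE t x) = x - mulE t (cE t x) := by
  rw [cE_mulE, if_pos rfl]

lemma Lam0_mulE_xi (j : Fin n) (z : SForm n) :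
    Lam0 (mulE (dxiI n j) z) = mulE (dxiI n j) (Lam0 z) - cE (dxI n j) z := by
  unfold Lam0
  have key : ∀ k : Fin n,
      cE (dxiI n k) (cE (dxI n k) (mulE (dxiI n j) z))
      = mulE (dxiI n j) (cE (dxiI n k) (cE (dxI n k) z))
        - (if k = j then cE (dxI n j) z else 0) := by
    intro k
    rw [cE_mulE_ne (dxiI_ne_dxI j k) z, cE_neg]
    by_cases hkj : k = j
    · subst hkj
      rw [cE_mulE_eq (dxiI n k), if_pos rfl, neg_sub]
    · rw [cE_mulE_ne (fun h => hkj (dxiI_inj h).symm), neg_neg, if_neg hkj, sub_zero]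
  rw [Finset.sum_congr rfl (fun k _ => key k), Finset.sum_sub_distrib, ← mulE_sum,
    Finset.sum_ite_eq' Finset.univ j (fun _ => cE (dxI n j) z), if_pos (Finset.mem_univ j)]

lemma Lam0_mulE_x (i : Fin n) (z : SForm n) :
    Lam0 (mulE (dxI n i) z) = mulE (dxI n i) (Lam0 z) + cE (dxiI n i) z := by
  unfold Lam0
  have key : ∀ k : Fin n,
      cE (dxiI n k) (cE (dxI n k) (mulE (dxI n i) z))
      = mulE (dxI n i) (cE (dxiI n k) (cE (dxI n k) z))
        + (if k = i then cE (dxiI n i) z else 0) := by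
    intro k
    by_cases hki : k = i
    · subst hki
      rw [cE_mulE_eq (dxI n k), cE_sub, cE_mulE_ne (dxI_ne_dxiI k k), if_pos rfl]
      abel
    · rw [cE_mulE_ne (fun h => hki (dxI_inj h).symm), cE_neg,
        cE_mulE_ne (dxI_ne_dxiI i k), neg_neg, if_neg hki, add_zero]
  rw [Finset.sum_congr rfl (fun k _ => key k), Finset.sum_add_distrib, ← mulE_sum,
    Finset.sum_ite_eq' Finset.univ i (fun _ => cE (dxiI n i) z), if_pos (Finset.mem_univ i)]

end BKN
namespace BKN
variable {n : ℕ}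

/-- `j`-th partial derivative of a super-form-valued map. -/
def pd (β : (Fin n → ℝ) → SForm n) (j : Fin n) : (Fin n → ℝ) → SForm n :=
  fun y => fderiv ℝ β y (Pi.single j 1)

/-- `j`-th partial derivative of a scalar function. -/
def pdF (φ : (Fin n → ℝ) → ℝ) (j : Fin n) : (Fin n → ℝ) → ℝ :=
  fun y => fderiv ℝ φ y (Pi.single j 1)

lemma dS_eq (α : (Fin n → ℝ) → SForm n) (x : Fin n → ℝ) :
    dS n α x = ∑ i : Fin n, mulE (dxI n i) (pd α i x) :=
  Finset.sum_congr rfl fun i _ => by rw [wedge_sDx]; rfl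

lemma dSh_eq (α : (Fin n → ℝ) → SForm n) (x : Fin n → ℝ) :
    dSh n α x = ∑ i : Fin n, mulE (dxiI n i) (pd α i x) :=
  Finset.sum_congr rfl fun i _ => by rw [wedge_sDxi]; rfl

lemma wedge_dShFun (φ : (Fin n → ℝ) → ℝ) (x : Fin n → ℝ) (β : SForm n) :
    wedge (dShFun n φ x) β = ∑ j : Fin n, pdF φ j x • mulE (dxiI n j) β := by
  unfold dShFun
  rw [wedge_sum_left]
  exact Finset.sum_congr rfl fun j _ => by rw [wedge_smul_left, wedge_sDxi]; rfl

lemma dShPhi_eq (φ : (Fin n → ℝ) → ℝ) (α : (Fin n → ℝ) → SForm n) (y : Fin n → ℝ) :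
    dShPhi n φ α y
      = ∑ j : Fin n, mulE (dxiI n j) (pd α j y)
        - ∑ j : Fin n, pdF φ j y • mulE (dxiI n j) (α y) := by
  unfold dShPhi
  rw [dSh_eq, wedge_dShFun]

lemma wedge_ddShFun (φ : (Fin n → ℝ) → ℝ) (x : Fin n → ℝ) (β : SForm n) :
    wedge (ddShFun n φ x) β
      = ∑ i : Fin n, ∑ j : Fin n,
          pdF (pdF φ j) i x • mulE (dxI n i) (mulE (dxiI n j) β) := by
  unfold ddShFun
  rw [wedge_sum_left]
  refine Finset.sum_congr rfl fun i _ => ?_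
  rw [wedge_sum_left]
  refine Finset.sum_congr rfl fun j _ => ?_
  rw [wedge_smul_left, wedge_dx_dxi, wedge_pair (dxI_lt_dxiI i j)]
  rfl

/-- Derivative of the composition with a linear operator on the (finite-dimensional)
exterior algebra. -/
lemma fderiv_linear_apply (L : SForm n →ₗ[ℝ] SForm n) {β : (Fin n → ℝ) → SForm n}
    {x : Fin n → ℝ} (hβ : DifferentiableAt ℝ β x) (v : Fin n → ℝ) :
    fderiv ℝ (fun y => L (β y)) x v = L (fderiv ℝ β x v) := by
  have h := ((LinearMap.toContinuousLinearMap L).hasFDerivAt (x := β x)).comp x hβ.hasFDerivAt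
  have h2 : fderiv ℝ (fun y => L (β y)) x
      = (LinearMap.toContinuousLinearMap L).comp (fderiv ℝ β x) := h.fderiv
  rw [h2]
  rfl

lemma differentiable_linear_comp (L : SForm n →ₗ[ℝ] SForm n) {β : (Fin n → ℝ) → SForm n}
    (hβ : Differentiable ℝ β) : Differentiable ℝ (fun y => L (β y)) :=
  fun y => ((LinearMap.toContinuousLinearMap L).differentiableAt).comp y (hβ y)

lemma pd_linear (L : SForm n →ₗ[ℝ] SForm n) {β : (Fin n → ℝ) → SForm n}
    (hβ : Differentiable ℝ β) (j : Fin n) (y : Fin n → ℝ) :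
    pd (fun z => L (β z)) j y = L (pd β j y) :=
  fderiv_linear_apply L (hβ y) (Pi.single j 1)

lemma contDiff_pd {β : (Fin n → ℝ) → SForm n} (hβ : ContDiff ℝ (⊤ : ℕ∞) β) (j : Fin n) :
    ContDiff ℝ 1 (pd β j) := by
  have h1 : ContDiff ℝ 1 (fderiv ℝ β) := hβ.fderiv_right (WithTop.coe_le_coe.2 le_top)
  exact h1.clm_apply contDiff_const

lemma contDiff_pdF {φ : (Fin n → ℝ) → ℝ} (hφ : ContDiff ℝ (⊤ : ℕ∞) φ) (j : Fin n) :
    ContDiff ℝ 1 (pdF φ j) := by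
  have h1 : ContDiff ℝ 1 (fderiv ℝ φ) := hφ.fderiv_right (WithTop.coe_le_coe.2 le_top)
  exact h1.clm_apply contDiff_const

lemma pd_sum {ι : Type*} (F : Finset ι) (f : ι → (Fin n → ℝ) → SForm n)
    (hf : ∀ i ∈ F, Differentiable ℝ (f i)) (j : Fin n) (y : Fin n → ℝ) :
    pd (fun z => ∑ i ∈ F, f i z) j y = ∑ i ∈ F, pd (f i) j y := by
  unfold pd
  rw [fderiv_fun_sum (fun i hi => (hf i hi y))]
  simp

lemma pd_sub {β γ : (Fin n → ℝ) → SForm n} (hβ : Differentiable ℝ β)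
    (hγ : Differentiable ℝ γ) (j : Fin n) (y : Fin n → ℝ) :
    pd (fun z => β z - γ z) j y = pd β j y - pd γ j y := by
  unfold pd
  rw [fderiv_fun_sub (hβ y) (hγ y)]
  rfl

lemma pd_smul {c : (Fin n → ℝ) → ℝ} {β : (Fin n → ℝ) → SForm n}
    (hc : Differentiable ℝ c) (hβ : Differentiable ℝ β) (j : Fin n) (y : Fin n → ℝ) :
    pd (fun z => c z • β z) j y = pdF c j y • β y + c y • pd β j y := by
  unfold pd pdF
  rw [fderiv_fun_smul (hc y) (hβ y)]
  simp only [ContinuousLinearMap.add_apply, ContinuousLinearMap.smul_apply,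
    ContinuousLinearMap.smulRight_apply]
  abel

end BKN
namespace BKN
variable {n : ℕ}

lemma Lam_comm_F (Lam : SForm n →ₗ[ℝ] SForm n)
    (hLam : ∀ x y : SForm n, sip (Lop n x) y = sip x (Lam y))
    (j : Fin n) (X : SForm n) :
    Lam (mulE (dxiI n j) X) = mulE (dxiI n j) (Lam X) - cE (dxI n j) X := by
  have hL := Lam_eq_Lam0 Lam hLam
  rw [hL, Lam0_mulE_xi, hL]

lemma Lam_comm_E (Lam : SForm n →ₗ[ℝ] SForm n)
    (hLam : ∀ x y : SForm n, sip (Lop n x) y = sip x (Lam y))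
    (i : Fin n) (X : SForm n) :
    Lam (mulE (dxI n i) X) = mulE (dxI n i) (Lam X) + cE (dxiI n i) X := by
  have hL := Lam_eq_Lam0 Lam hLam
  rw [hL, Lam0_mulE_x, hL]

/-- Pointwise commutator `[Λ, d#_φ]` formula. -/
lemma commut1 (Lam : SForm n →ₗ[ℝ] SForm n)
    (hLam : ∀ x y : SForm n, sip (Lop n x) y = sip x (Lam y))
    (φ : (Fin n → ℝ) → ℝ) {β : (Fin n → ℝ) → SForm n}
    (hβ : Differentiable ℝ β) (y : Fin n → ℝ) :
    Lam (dShPhi n φ β y) - dShPhi n φ (fun z => Lam (β z)) y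
      = ∑ j : Fin n, pdF φ j y • cE (dxI n j) (β y)
        - ∑ j : Fin n, cE (dxI n j) (pd β j y) := by
  rw [dShPhi_eq, dShPhi_eq]
  have e1 : ∑ j : Fin n, mulE (dxiI n j) (pd (fun z => Lam (β z)) j y)
      = ∑ j : Fin n, mulE (dxiI n j) (Lam (pd β j y)) :=
    Finset.sum_congr rfl fun j _ => by rw [pd_linear Lam hβ j y]
  rw [e1, map_sub, map_sum]
  have e2 : ∑ j : Fin n, Lam (mulE (dxiI n j) (pd β j y))
      = ∑ j : Fin n, (mulE (dxiI n j) (Lam (pd β j y)) - cE (dxI n j) (pd β j y)) :=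
    Finset.sum_congr rfl fun j _ => Lam_comm_F Lam hLam j _
  have e3 : Lam (∑ j : Fin n, pdF φ j y • mulE (dxiI n j) (β y))
      = ∑ j : Fin n, pdF φ j y •
          (mulE (dxiI n j) (Lam (β y)) - cE (dxI n j) (β y)) := by
    rw [map_sum]
    exact Finset.sum_congr rfl fun j _ => by
      rw [map_smul, Lam_comm_F Lam hLam j]
  rw [e2, e3, Finset.sum_sub_distrib]
  have e4 : ∑ j : Fin n, pdF φ j y •
        (mulE (dxiI n j) (Lam (β y)) - cE (dxI n j) (β y))
      = ∑ j : Fin n, pdF φ j y • mulE (dxiI n j) (Lam (β y))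
        - ∑ j : Fin n, pdF φ j y • cE (dxI n j) (β y) := by
    rw [← Finset.sum_sub_distrib]
    exact Finset.sum_congr rfl fun j _ => smul_sub _ _ _
  rw [e4]
  abel

/-- Pointwise commutator `[Λ, d]` formula. -/
lemma commut2 (Lam : SForm n →ₗ[ℝ] SForm n)
    (hLam : ∀ x y : SForm n, sip (Lop n x) y = sip x (Lam y))
    {β : (Fin n → ℝ) → SForm n} (hβ : Differentiable ℝ β) (y : Fin n → ℝ) :
    Lam (dS n β y) - dS n (fun z => Lam (β z)) y
      = ∑ i : Fin n, cE (dxiI n i) (pd β i y) := by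
  rw [dS_eq, dS_eq]
  have e1 : ∑ i : Fin n, mulE (dxI n i) (pd (fun z => Lam (β z)) i y)
      = ∑ i : Fin n, mulE (dxI n i) (Lam (pd β i y)) :=
    Finset.sum_congr rfl fun i _ => by rw [pd_linear Lam hβ i y]
  rw [e1, map_sum]
  have e2 : ∑ i : Fin n, Lam (mulE (dxI n i) (pd β i y))
      = ∑ i : Fin n, (mulE (dxI n i) (Lam (pd β i y)) + cE (dxiI n i) (pd β i y)) :=
    Finset.sum_congr rfl fun i _ => Lam_comm_E Lam hLam i _
  rw [e2, Finset.sum_add_distrib]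
  abel

/-- Symmetry of second partial derivatives. -/
lemma pd_pd_symm {β : (Fin n → ℝ) → SForm n} (hβ : ContDiff ℝ (⊤ : ℕ∞) β)
    (x : Fin n → ℝ) (i j : Fin n) : pd (pd β j) i x = pd (pd β i) j x := by
  have hd : DifferentiableAt ℝ (fderiv ℝ β) x :=
    ((hβ.fderiv_right ((WithTop.coe_le_coe.2 le_top) : (1:WithTop ℕ∞) + 1 ≤ ((⊤ : ℕ∞) : WithTop ℕ∞))).differentiable one_ne_zero) x
  have h1 : ∀ (u v : Fin n → ℝ),
      fderiv ℝ (fun y => fderiv ℝ β y u) x v = fderiv ℝ (fderiv ℝ β) x v u := by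
    intro u v
    rw [fderiv_clm_apply hd (differentiableAt_const u)]
    simp
  have hsymm : IsSymmSndFDerivAt ℝ β x :=
    (hβ.contDiffAt).isSymmSndFDerivAt ((by rw [minSmoothness_of_isRCLikeNormedField]; exact WithTop.coe_le_coe.2 le_top) : minSmoothness ℝ 2 ≤ ((⊤ : ℕ∞) : WithTop ℕ∞))
  unfold pd
  rw [h1, h1, hsymm]

end BKN
namespace BKN
variable {n : ℕ}

lemma dsum_add (f g : Fin n → Fin n → SForm n) :
    ((∑ i : Fin n, ∑ j : Fin n, f i j) + ∑ i : Fin n, ∑ j : Fin n, g i j)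
      = ∑ i : Fin n, ∑ j : Fin n, (f i j + g i j) := by
  rw [← Finset.sum_add_distrib]
  exact Finset.sum_congr rfl fun i _ => (Finset.sum_add_distrib).symm

lemma dsum_sub (f g : Fin n → Fin n → SForm n) :
    ((∑ i : Fin n, ∑ j : Fin n, f i j) - ∑ i : Fin n, ∑ j : Fin n, g i j)
      = ∑ i : Fin n, ∑ j : Fin n, (f i j - g i j) := by
  rw [← Finset.sum_sub_distrib]
  exact Finset.sum_congr rfl fun i _ => (Finset.sum_sub_distrib _ _).symm

lemma final_algebra (A : SForm n) (Ai : Fin n → SForm n) (Aij : Fin n → Fin n → SForm n)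
    (hs : ∀ i j, Aij i j = Aij j i) (p : Fin n → ℝ) (q : Fin n → Fin n → ℝ) :
    (∑ i : Fin n, mulE (dxI n i)
        ((∑ j : Fin n, (q i j • cE (dxI n j) A + p j • cE (dxI n j) (Ai i)))
          - ∑ j : Fin n, cE (dxI n j) (Aij i j)))
    + ((∑ j : Fin n, p j • cE (dxI n j) (∑ i : Fin n, mulE (dxI n i) (Ai i)))
        - ∑ j : Fin n, cE (dxI n j) (∑ i : Fin n, mulE (dxI n i) (Aij j i)))
    + ((∑ j : Fin n, mulE (dxiI n j) (∑ i : Fin n, cE (dxiI n i) (Aij j i)))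
        - ∑ j : Fin n, p j • mulE (dxiI n j) (∑ i : Fin n, cE (dxiI n i) (Ai i)))
    + (∑ i : Fin n, cE (dxiI n i)
        ((∑ j : Fin n, mulE (dxiI n j) (Aij i j))
          - ∑ j : Fin n, (q i j • mulE (dxiI n j) A + p j • mulE (dxiI n j) (Ai i))))
    = ∑ i : Fin n, ∑ j : Fin n,
        q i j • (mulE (dxI n i) (cE (dxI n j) A) - cE (dxiI n i) (mulE (dxiI n j) A)) := by
  have ht1 : ∑ i : Fin n, mulE (dxI n i)
        ((∑ j : Fin n, (q i j • cE (dxI n j) A + p j • cE (dxI n j) (Ai i)))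
          - ∑ j : Fin n, cE (dxI n j) (Aij i j))
      = ∑ i : Fin n, ∑ j : Fin n,
          (q i j • mulE (dxI n i) (cE (dxI n j) A)
            + p j • mulE (dxI n i) (cE (dxI n j) (Ai i))
            - mulE (dxI n i) (cE (dxI n j) (Aij i j))) :=
    Finset.sum_congr rfl fun i _ => by
      rw [mulE_sub, mulE_sum, mulE_sum, ← Finset.sum_sub_distrib]
      exact Finset.sum_congr rfl fun j _ => by
        rw [mulE_add, mulE_smul, mulE_smul]
  have ht2a : ∑ j : Fin n, p j • cE (dxI n j) (∑ i : Fin n, mulE (dxI n i) (Ai i))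
      = ∑ i : Fin n, ∑ j : Fin n, p j • cE (dxI n j) (mulE (dxI n i) (Ai i)) := by
    rw [Finset.sum_comm]
    exact Finset.sum_congr rfl fun j _ => by rw [cE_sum, Finset.smul_sum]
  have ht2b : ∑ j : Fin n, cE (dxI n j) (∑ i : Fin n, mulE (dxI n i) (Aij j i))
      = ∑ i : Fin n, ∑ j : Fin n, cE (dxI n j) (mulE (dxI n i) (Aij j i)) := by
    rw [Finset.sum_comm]
    exact Finset.sum_congr rfl fun j _ => by rw [cE_sum]
  have ht3a : ∑ j : Fin n, mulE (dxiI n j) (∑ i : Fin n, cE (dxiI n i) (Aij j i))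
      = ∑ i : Fin n, ∑ j : Fin n, mulE (dxiI n j) (cE (dxiI n i) (Aij j i)) := by
    rw [Finset.sum_comm]
    exact Finset.sum_congr rfl fun j _ => by rw [mulE_sum]
  have ht3b : ∑ j : Fin n, p j • mulE (dxiI n j) (∑ i : Fin n, cE (dxiI n i) (Ai i))
      = ∑ i : Fin n, ∑ j : Fin n, p j • mulE (dxiI n j) (cE (dxiI n i) (Ai i)) := by
    rw [Finset.sum_comm]
    exact Finset.sum_congr rfl fun j _ => by rw [mulE_sum, Finset.smul_sum]
  have ht4 : ∑ i : Fin n, cE (dxiI n i)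
        ((∑ j : Fin n, mulE (dxiI n j) (Aij i j))
          - ∑ j : Fin n, (q i j • mulE (dxiI n j) A + p j • mulE (dxiI n j) (Ai i)))
      = ∑ i : Fin n, ∑ j : Fin n,
          (cE (dxiI n i) (mulE (dxiI n j) (Aij i j))
            - (q i j • cE (dxiI n i) (mulE (dxiI n j) A)
              + p j • cE (dxiI n i) (mulE (dxiI n j) (Ai i)))) :=
    Finset.sum_congr rfl fun i _ => by
      rw [cE_sub, cE_sum, cE_sum, ← Finset.sum_sub_distrib]
      exact Finset.sum_congr rfl fun j _ => by
        rw [cE_add, cE_smul, cE_smul]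
  rw [ht1, ht2a, ht2b, ht3a, ht3b, ht4, dsum_sub, dsum_sub, dsum_add, dsum_add, dsum_add]
  refine Finset.sum_congr rfl fun i _ => Finset.sum_congr rfl fun j _ => ?_
  have hEa : ∀ w : SForm n, mulE (dxI n i) (cE (dxI n j) w)
      = (if i = j then w else 0) - cE (dxI n j) (mulE (dxI n i) w) := by
    intro w
    have hif : (if dxI n i = dxI n j then w else 0) = (if i = j then w else 0) := by
      by_cases hij : i = j
      · subst hij; rw [if_pos rfl, if_pos rfl]
      · rw [if_neg (fun hc => hij (dxI_inj hc)), if_neg hij]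
    have h := eq_sub_of_add_eq (CAR (dxI n i) (dxI n j) w)
    rwa [hif] at h
  have hFb : ∀ w : SForm n, cE (dxiI n i) (mulE (dxiI n j) w)
      = (if i = j then w else 0) - mulE (dxiI n j) (cE (dxiI n i) w) := by
    intro w
    have hif : (if dxiI n j = dxiI n i then w else 0) = (if i = j then w else 0) := by
      by_cases hij : i = j
      · subst hij; rw [if_pos rfl, if_pos rfl]
      · rw [if_neg (fun hc => hij (dxiI_inj hc).symm), if_neg hij]
    have h := eq_sub_of_add_eq' (CAR (dxiI n j) (dxiI n i) w)
    rwa [hif] at h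
  rw [hs j i, hEa (Ai i), hEa (Aij i j), hFb (Aij i j), hFb (Ai i), hFb A]
  simp only [smul_sub, smul_add]
  abel

end BKN
namespace BKN
variable {n : ℕ}

lemma pd_sum_L_pd (L : Fin n → SForm n →ₗ[ℝ] SForm n) {α : (Fin n → ℝ) → SForm n}
    (hpdα : ∀ j, Differentiable ℝ (pd α j)) (j : Fin n) (x : Fin n → ℝ) :
    pd (fun y => ∑ i : Fin n, L i (pd α i y)) j x
      = ∑ i : Fin n, L i (pd (pd α i) j x) := by
  calc pd (fun y => ∑ i : Fin n, L i (pd α i y)) j x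
      = ∑ i : Fin n, pd (fun y => L i (pd α i y)) j x :=
        pd_sum Finset.univ (fun i y => L i (pd α i y))
          (fun i _ => differentiable_linear_comp (L i) (hpdα i)) j x
    _ = _ := Finset.sum_congr rfl fun i _ => pd_linear (L i) (hpdα i) j x

lemma pd_sum_smul_L (L : Fin n → SForm n →ₗ[ℝ] SForm n) (φ : (Fin n → ℝ) → ℝ)
    (hφd : ∀ j, Differentiable ℝ (pdF φ j)) {α : (Fin n → ℝ) → SForm n}
    (hαd : Differentiable ℝ α) (i : Fin n) (x : Fin n → ℝ) :
    pd (fun y => ∑ j : Fin n, pdF φ j y • L j (α y)) i x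
      = ∑ j : Fin n, (pdF (pdF φ j) i x • L j (α x) + pdF φ j x • L j (pd α i x)) := by
  calc pd (fun y => ∑ j : Fin n, pdF φ j y • L j (α y)) i x
      = ∑ j : Fin n, pd (fun y => pdF φ j y • L j (α y)) i x :=
        pd_sum Finset.univ (fun j y => pdF φ j y • L j (α y))
          (fun j _ => (hφd j).smul (differentiable_linear_comp (L j) hαd)) i x
    _ = _ := Finset.sum_congr rfl fun j _ => by
        calc pd (fun y => pdF φ j y • L j (α y)) i x
            = pdF (pdF φ j) i x • L j (α x)
              + pdF φ j x • pd (fun y => L j (α y)) i x :=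
              pd_smul (hφd j) (differentiable_linear_comp (L j) hαd) i x
          _ = _ := by rw [pd_linear (L j) hαd i x]

lemma pd_shape1 (L : Fin n → SForm n →ₗ[ℝ] SForm n) (φ : (Fin n → ℝ) → ℝ)
    (hφd : ∀ j, Differentiable ℝ (pdF φ j)) {α : (Fin n → ℝ) → SForm n}
    (hαd : Differentiable ℝ α) (hpdα : ∀ j, Differentiable ℝ (pd α j))
    (i : Fin n) (x : Fin n → ℝ) :
    pd (fun y => (∑ j : Fin n, L j (pd α j y)) - ∑ j : Fin n, pdF φ j y • L j (α y)) i x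
      = (∑ j : Fin n, L j (pd (pd α j) i x))
        - ∑ j : Fin n, (pdF (pdF φ j) i x • L j (α x) + pdF φ j x • L j (pd α i x)) := by
  have d1 : Differentiable ℝ (fun y => ∑ j : Fin n, L j (pd α j y)) :=
    Differentiable.fun_sum fun j _ => differentiable_linear_comp (L j) (hpdα j)
  have d2 : Differentiable ℝ (fun y => ∑ j : Fin n, pdF φ j y • L j (α y)) :=
    Differentiable.fun_sum fun j _ => (hφd j).smul (differentiable_linear_comp (L j) hαd)
  calc pd (fun y => (∑ j : Fin n, L j (pd α j y)) - ∑ j : Fin n, pdF φ j y • L j (α y)) i x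
      = pd (fun y => ∑ j : Fin n, L j (pd α j y)) i x
        - pd (fun y => ∑ j : Fin n, pdF φ j y • L j (α y)) i x := pd_sub d1 d2 i x
    _ = _ := by rw [pd_sum_L_pd L hpdα i x, pd_sum_smul_L L φ hφd hαd i x]

lemma pd_shape2 (L : Fin n → SForm n →ₗ[ℝ] SForm n) (φ : (Fin n → ℝ) → ℝ)
    (hφd : ∀ j, Differentiable ℝ (pdF φ j)) {α : (Fin n → ℝ) → SForm n}
    (hαd : Differentiable ℝ α) (hpdα : ∀ j, Differentiable ℝ (pd α j))
    (i : Fin n) (x : Fin n → ℝ) :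
    pd (fun y => (∑ j : Fin n, pdF φ j y • L j (α y)) - ∑ j : Fin n, L j (pd α j y)) i x
      = (∑ j : Fin n, (pdF (pdF φ j) i x • L j (α x) + pdF φ j x • L j (pd α i x)))
        - ∑ j : Fin n, L j (pd (pd α j) i x) := by
  have d1 : Differentiable ℝ (fun y => ∑ j : Fin n, L j (pd α j y)) :=
    Differentiable.fun_sum fun j _ => differentiable_linear_comp (L j) (hpdα j)
  have d2 : Differentiable ℝ (fun y => ∑ j : Fin n, pdF φ j y • L j (α y)) :=
    Differentiable.fun_sum fun j _ => (hφd j).smul (differentiable_linear_comp (L j) hαd)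
  calc pd (fun y => (∑ j : Fin n, pdF φ j y • L j (α y)) - ∑ j : Fin n, L j (pd α j y)) i x
      = pd (fun y => ∑ j : Fin n, pdF φ j y • L j (α y)) i x
        - pd (fun y => ∑ j : Fin n, L j (pd α j y)) i x := pd_sub d2 d1 i x
    _ = _ := by rw [pd_sum_L_pd L hpdα i x, pd_sum_smul_L L φ hφd hαd i x]

end BKN
/-- Bochner–Kodaira–Nakano type identity: for smooth `φ : ℝⁿ → ℝ`
and every smooth super form `α` on `ℝⁿ`,
`d([Λ,d#_φ]α) + [Λ,d#_φ](dα) + d#_φ([Λ,d]α) + [Λ,d](d#_φ α) = dd#φ ∧ Λα − Λ(dd#φ ∧ α)`,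
i.e. `□_φ = □#_φ + [dd#φ, Λ]`. -/
theorem bochner_kodaira_nakano (n : ℕ) (hn : 1 ≤ n)
    (Lam : SForm n →ₗ[ℝ] SForm n)
    (hLam : ∀ x y : SForm n, sip (Lop n x) y = sip x (Lam y))
    (φ : (Fin n → ℝ) → ℝ) (hφ : ContDiff ℝ (⊤ : ℕ∞) φ)
    (α : (Fin n → ℝ) → SForm n) (hα : ContDiff ℝ (⊤ : ℕ∞) α) (x : Fin n → ℝ) :
    dS n (fun y => Lam (dShPhi n φ α y) - dShPhi n φ (fun z => Lam (α z)) y) x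
      + (Lam (dShPhi n φ (dS n α) x) - dShPhi n φ (fun y => Lam (dS n α y)) x)
      + dShPhi n φ (fun y => Lam (dS n α y) - dS n (fun z => Lam (α z)) y) x
      + (Lam (dS n (dShPhi n φ α) x) - dS n (fun y => Lam (dShPhi n φ α y)) x)
    = wedge (ddShFun n φ x) (Lam (α x)) - Lam (wedge (ddShFun n φ x) (α x)) := by
  have hαd : Differentiable ℝ α := hα.differentiable (by simp)
  have hpdα : ∀ j, Differentiable ℝ (BKN.pd α j) :=
    fun j => (BKN.contDiff_pd hα j).differentiable one_ne_zero
  have hpdφ : ∀ j, Differentiable ℝ (BKN.pdF φ j) :=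
    fun j => (BKN.contDiff_pdF hφ j).differentiable one_ne_zero
  have hdSfun : dS n α = fun y => ∑ i : Fin n, BKN.mulE (dxI n i) (BKN.pd α i y) :=
    funext fun y => BKN.dS_eq α y
  have hdS_diff : Differentiable ℝ (dS n α) := by
    rw [hdSfun]
    exact Differentiable.fun_sum fun i _ =>
      BKN.differentiable_linear_comp (BKN.mulEL (dxI n i)) (hpdα i)
  have hdShPhi_fun : dShPhi n φ α
      = fun y => (∑ j : Fin n, BKN.mulE (dxiI n j) (BKN.pd α j y))
          - ∑ j : Fin n, BKN.pdF φ j y • BKN.mulE (dxiI n j) (α y) :=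
    funext fun y => BKN.dShPhi_eq φ α y
  have hdShPhi_diff : Differentiable ℝ (dShPhi n φ α) := by
    rw [hdShPhi_fun]
    exact Differentiable.sub
      (Differentiable.fun_sum fun j _ =>
        BKN.differentiable_linear_comp (BKN.mulEL (dxiI n j)) (hpdα j))
      (Differentiable.fun_sum fun j _ =>
        (hpdφ j).smul (BKN.differentiable_linear_comp (BKN.mulEL (dxiI n j)) hαd))
  -- Term 1
  have hfun1 : (fun y => Lam (dShPhi n φ α y) - dShPhi n φ (fun z => Lam (α z)) y)
      = fun y => (∑ j : Fin n, BKN.pdF φ j y • BKN.cE (dxI n j) (α y))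
          - ∑ j : Fin n, BKN.cE (dxI n j) (BKN.pd α j y) :=
    funext fun y => BKN.commut1 Lam hLam φ hαd y
  have hT1 : dS n (fun y => Lam (dShPhi n φ α y) - dShPhi n φ (fun z => Lam (α z)) y) x
      = ∑ i : Fin n, BKN.mulE (dxI n i)
          ((∑ j : Fin n, (BKN.pdF (BKN.pdF φ j) i x • BKN.cE (dxI n j) (α x)
              + BKN.pdF φ j x • BKN.cE (dxI n j) (BKN.pd α i x)))
            - ∑ j : Fin n, BKN.cE (dxI n j) (BKN.pd (BKN.pd α j) i x)) := by
    rw [hfun1, BKN.dS_eq]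
    exact Finset.sum_congr rfl fun i _ => congrArg (BKN.mulE (dxI n i))
      (BKN.pd_shape2 (fun j => BKN.cEL (dxI n j)) φ hpdφ hαd hpdα i x)
  -- Term 2
  have hpd_dS : ∀ j, BKN.pd (dS n α) j x
      = ∑ i : Fin n, BKN.mulE (dxI n i) (BKN.pd (BKN.pd α i) j x) := fun j => by
    rw [hdSfun]
    exact BKN.pd_sum_L_pd (fun i => BKN.mulEL (dxI n i)) hpdα j x
  have hT2 : Lam (dShPhi n φ (dS n α) x) - dShPhi n φ (fun y => Lam (dS n α y)) x
      = (∑ j : Fin n, BKN.pdF φ j x • BKN.cE (dxI n j)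
            (∑ i : Fin n, BKN.mulE (dxI n i) (BKN.pd α i x)))
        - ∑ j : Fin n, BKN.cE (dxI n j)
            (∑ i : Fin n, BKN.mulE (dxI n i) (BKN.pd (BKN.pd α i) j x)) := by
    rw [BKN.commut1 Lam hLam φ hdS_diff x]
    simp only [hpd_dS]
    rw [BKN.dS_eq α x]
  -- Term 3
  have hfun2 : (fun y => Lam (dS n α y) - dS n (fun z => Lam (α z)) y)
      = fun y => ∑ i : Fin n, BKN.cE (dxiI n i) (BKN.pd α i y) :=
    funext fun y => BKN.commut2 Lam hLam hαd y
  have hpdG2 : ∀ j, BKN.pd (fun y => ∑ i : Fin n, BKN.cE (dxiI n i) (BKN.pd α i y)) j x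
      = ∑ i : Fin n, BKN.cE (dxiI n i) (BKN.pd (BKN.pd α i) j x) := fun j =>
    BKN.pd_sum_L_pd (fun i => BKN.cEL (dxiI n i)) hpdα j x
  have hT3 : dShPhi n φ (fun y => Lam (dS n α y) - dS n (fun z => Lam (α z)) y) x
      = (∑ j : Fin n, BKN.mulE (dxiI n j)
            (∑ i : Fin n, BKN.cE (dxiI n i) (BKN.pd (BKN.pd α i) j x)))
        - ∑ j : Fin n, BKN.pdF φ j x • BKN.mulE (dxiI n j)
            (∑ i : Fin n, BKN.cE (dxiI n i) (BKN.pd α i x)) := by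
    rw [hfun2, BKN.dShPhi_eq]
    simp only [hpdG2]
  -- Term 4
  have hpdT4 : ∀ i, BKN.pd (dShPhi n φ α) i x
      = (∑ j : Fin n, BKN.mulE (dxiI n j) (BKN.pd (BKN.pd α j) i x))
        - ∑ j : Fin n, (BKN.pdF (BKN.pdF φ j) i x • BKN.mulE (dxiI n j) (α x)
            + BKN.pdF φ j x • BKN.mulE (dxiI n j) (BKN.pd α i x)) := fun i => by
    rw [hdShPhi_fun]
    exact BKN.pd_shape1 (fun j => BKN.mulEL (dxiI n j)) φ hpdφ hαd hpdα i x
  have hT4 : Lam (dS n (dShPhi n φ α) x) - dS n (fun y => Lam (dShPhi n φ α y)) x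
      = ∑ i : Fin n, BKN.cE (dxiI n i)
          ((∑ j : Fin n, BKN.mulE (dxiI n j) (BKN.pd (BKN.pd α j) i x))
            - ∑ j : Fin n, (BKN.pdF (BKN.pdF φ j) i x • BKN.mulE (dxiI n j) (α x)
                + BKN.pdF φ j x • BKN.mulE (dxiI n j) (BKN.pd α i x))) := by
    rw [BKN.commut2 Lam hLam hdShPhi_diff x]
    simp only [hpdT4]
  -- Right-hand side
  have hR : wedge (ddShFun n φ x) (Lam (α x)) - Lam (wedge (ddShFun n φ x) (α x))
      = ∑ i : Fin n, ∑ j : Fin n, BKN.pdF (BKN.pdF φ j) i x •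
          (BKN.mulE (dxI n i) (BKN.cE (dxI n j) (α x))
            - BKN.cE (dxiI n i) (BKN.mulE (dxiI n j) (α x))) := by
    rw [BKN.wedge_ddShFun, BKN.wedge_ddShFun, map_sum, ← Finset.sum_sub_distrib]
    refine Finset.sum_congr rfl fun i _ => ?_
    rw [map_sum, ← Finset.sum_sub_distrib]
    refine Finset.sum_congr rfl fun j _ => ?_
    rw [map_smul, BKN.Lam_comm_E Lam hLam, BKN.Lam_comm_F Lam hLam, BKN.mulE_sub]
    simp only [smul_sub, smul_add]
    abel
  rw [hT1, hT2, hT3, hT4, hR]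
  exact BKN.final_algebra (α x) (fun i => BKN.pd α i x)
    (fun i j => BKN.pd (BKN.pd α j) i x) (fun i j => BKN.pd_pd_symm hα x i j)
    (fun j => BKN.pdF φ j x) (fun i j => BKN.pdF (BKN.pdF φ j) i x)
end
end

section
/- Let E and F be real Hilbert spaces, let T be a closed, densely defined linear operator from E to F, with adjoint T*, and let H be a closed subspace of F containing the range of T. Suppose there is a constant c > 0 such that ‖T*y‖²_E ≥ c‖y‖²_F for every y ∈ dom(T*) ∩ H. Then for every y ∈ H there exists x ∈ E with Tx = y and ‖x‖²_E ≤ c⁻¹‖y‖²_F. -/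
/-!
Since the range of `T` lies in `H`, the complement `Hᗮ` lies in the kernel of `T*`, so projecting
`z ∈ dom T*` onto `H` changes neither `⟪y, z⟫` nor `T* z`; the estimate then gives
`|⟪y, z⟫| ≤ c^(-1/2) ‖y‖ ‖T* z‖`. Thus `T* z ↦ ⟪y, z⟫` is a well-defined functional of norm
at most `c^(-1/2) ‖y‖` on the range of `T*`. Hahn–Banach and Riesz turn it into some `x` with
that norm bound and `⟪x, T* z⟫ = ⟪y, z⟫` for all `z`, which says that `(x, y)` is orthogonal to
the orthogonal complement of the graph of `T`; as the graph is closed, `(x, y)` lies in it.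
-/

open scoped InnerProductSpace

namespace LinearMap

variable {R V M N : Type*} [Ring R] [AddCommGroup V] [Module R V] [AddCommGroup M]
  [Module R M] [AddCommGroup N] [Module R N]

theorem exists_comp_rangeRestrict_eq_of_ker_le (g : V →ₗ[R] M) (f : V →ₗ[R] N)
    (h : ker g ≤ ker f) : ∃ ψ : range g →ₗ[R] N, ψ ∘ₗ g.rangeRestrict = f :=
  ⟨(ker g).liftQ f h ∘ₗ g.quotKerEquivRange.symm.toLinearMap, by
    ext v
    exact congrArg ((ker g).liftQ f h) (quotKerEquivRange_symm_apply_image g v ⟨v, rfl⟩)⟩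

end LinearMap

section

variable {𝕜 E F : Type*} [RCLike 𝕜]
  [NormedAddCommGroup E] [InnerProductSpace 𝕜 E] [NormedAddCommGroup F] [InnerProductSpace 𝕜 F]

theorem exists_inner_eq_of_norm_le {V : Type*} [AddCommGroup V] [Module 𝕜 V] [CompleteSpace E]
    (g : V →ₗ[𝕜] E) (f : V →ₗ[𝕜] 𝕜) {C : ℝ} (hC : 0 ≤ C) (hfg : ∀ v, ‖f v‖ ≤ C * ‖g v‖) :
    ∃ x : E, ‖x‖ ≤ C ∧ ∀ v, ⟪x, g v⟫_𝕜 = f v := by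
  have hker : LinearMap.ker g ≤ LinearMap.ker f := fun v hv => by
    simpa [LinearMap.mem_ker.mp hv] using hfg v
  obtain ⟨ψ, hψ⟩ := g.exists_comp_rangeRestrict_eq_of_ker_le f hker
  have hψ_apply (v : V) : ψ (g.rangeRestrict v) = f v := LinearMap.congr_fun hψ v
  have hψ_bound (w : LinearMap.range g) : ‖ψ w‖ ≤ C * ‖w‖ := by
    obtain ⟨v, rfl⟩ := g.surjective_rangeRestrict w
    simpa [hψ_apply] using hfg v
  obtain ⟨Φ, hΦ, hΦ_norm⟩ := exists_extension_norm_eq _ (ψ.mkContinuous C hψ_bound)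
  refine ⟨(InnerProductSpace.toDual 𝕜 E).symm Φ, ?_, fun v => ?_⟩
  · rw [LinearIsometryEquiv.norm_map, hΦ_norm]
    exact ψ.mkContinuous_norm_le hC hψ_bound
  · rw [InnerProductSpace.toDual_symm_apply, ← hψ_apply]
    exact hΦ (g.rangeRestrict v)

namespace LinearPMap

variable [CompleteSpace E] {T : E →ₗ.[𝕜] F}

theorem exists_adjoint_apply_eq_of_starProjection (hT : Dense (T.domain : Set E))
    {K : Submodule 𝕜 F} [K.HasOrthogonalProjection] (hrange : ∀ x : T.domain, T x ∈ K)
    (z : T†.domain) : ∃ w : T†.domain, (w : F) = K.starProjection z ∧ T† w = T† z := by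
  set v := (z : F) - K.starProjection z
  have hv (x : T.domain) : ⟪v, T x⟫_𝕜 = 0 :=
    (K.mem_orthogonal' v).1 (K.sub_starProjection_mem_orthogonal _) _ (hrange x)
  have hv_mem : v ∈ T†.domain := mem_adjoint_domain_of_exists v ⟨0, fun x => by simp [hv x]⟩
  have hTv : T† ⟨v, hv_mem⟩ = 0 := adjoint_apply_eq hT _ fun x => by simp [hv x]
  exact ⟨z - ⟨v, hv_mem⟩, by simp [v], by rw [map_sub, hTv, sub_zero]⟩

theorem norm_inner_le_of_norm_le_adjoint (hT : Dense (T.domain : Set E))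
    {K : Submodule 𝕜 F} [K.HasOrthogonalProjection] (hrange : ∀ x : T.domain, T x ∈ K) {C : ℝ}
    (hbound : ∀ z : T†.domain, (z : F) ∈ K → ‖(z : F)‖ ≤ C * ‖T† z‖)
    {y : F} (hy : y ∈ K) (z : T†.domain) : ‖⟪y, (z : F)⟫_𝕜‖ ≤ C * ‖y‖ * ‖T† z‖ := by
  obtain ⟨w, hw, hTw⟩ := exists_adjoint_apply_eq_of_starProjection hT hrange z
  calc ‖⟪y, (z : F)⟫_𝕜‖ = ‖⟪y, (w : F)⟫_𝕜‖ := by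
        rw [hw, ← K.inner_starProjection_left_eq_right, K.starProjection_eq_self_iff.mpr hy]
    _ ≤ ‖y‖ * ‖(w : F)‖ := norm_inner_le_norm _ _
    _ ≤ ‖y‖ * (C * ‖T† w‖) := by
        gcongr
        exact hbound w (hw ▸ K.starProjection_apply_mem z)
    _ = C * ‖y‖ * ‖T† z‖ := by rw [hTw]; ring

theorem IsClosed.mem_graph_of_forall_inner_adjoint [CompleteSpace F] (hclosed : T.IsClosed)
    (hT : Dense (T.domain : Set E)) {x : E} {y : F}
    (h : ∀ z : T†.domain, ⟪T† z, x⟫_𝕜 = ⟪(z : F), y⟫_𝕜) : (x, y) ∈ T.graph := by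
  let G : Submodule 𝕜 (WithLp 2 (E × F)) :=
    T.graph.comap (WithLp.linearEquiv 2 𝕜 (E × F)).toLinearMap
  have hG : _root_.IsClosed (G : Set (WithLp 2 (E × F))) :=
    hclosed.preimage (WithLp.prod_continuous_ofLp 2 E F)
  suffices WithLp.toLp 2 (x, y) ∈ Gᗮᗮ by
    rwa [Submodule.orthogonal_orthogonal_eq_closure, hG.submodule_topologicalClosure_eq] at this
  intro w hw
  set u := (WithLp.ofLp w).1
  set v := (WithLp.ofLp w).2
  have hv (a : T.domain) : ⟪-u, (a : E)⟫_𝕜 = ⟪v, T a⟫_𝕜 := by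
    have : ⟪u, (a : E)⟫_𝕜 + ⟪v, T a⟫_𝕜 = 0 :=
      (G.mem_orthogonal' w).1 hw (WithLp.toLp 2 ((a : E), T a)) (T.mem_graph a)
    rw [inner_neg_left]
    linear_combination -this
  have hxv := h ⟨v, mem_adjoint_domain_of_exists v ⟨-u, hv⟩⟩
  rw [adjoint_apply_eq hT _ hv, inner_neg_left] at hxv
  change ⟪u, x⟫_𝕜 + ⟪v, y⟫_𝕜 = 0
  linear_combination -hxv

theorem exists_apply_eq_of_norm_le_adjoint [CompleteSpace F] (hclosed : T.IsClosed)
    (hT : Dense (T.domain : Set E)) {K : Submodule 𝕜 F} [K.HasOrthogonalProjection]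
    (hrange : ∀ x : T.domain, T x ∈ K) {C : ℝ} (hC : 0 ≤ C)
    (hbound : ∀ z : T†.domain, (z : F) ∈ K → ‖(z : F)‖ ≤ C * ‖T† z‖) {y : F} (hy : y ∈ K) :
    ∃ x : T.domain, T x = y ∧ ‖(x : E)‖ ≤ C * ‖y‖ := by
  obtain ⟨x, hx_norm, hx⟩ := exists_inner_eq_of_norm_le T†.toFun
    ((innerₛₗ 𝕜 y).comp T†.domain.subtype) (mul_nonneg hC (norm_nonneg y))
    (norm_inner_le_of_norm_le_adjoint hT hrange hbound hy)
  have hxy : (x, y) ∈ T.graph := hclosed.mem_graph_of_forall_inner_adjoint hT fun z => by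
    rw [← inner_conj_symm, ← inner_conj_symm (z : F)]
    exact congrArg _ (hx z)
  obtain ⟨x', hx', hTx'⟩ := T.mem_graph_iff.1 hxy
  exact ⟨x', hTx', hx' ▸ hx_norm⟩

end LinearPMap

end

/-- Hörmander's functional-analytic lemma: let `E, F` be real Hilbert
spaces, `T` a closed densely defined operator from `E` to `F` with adjoint `T*`, and `H`
a closed subspace of `F` containing the range of `T`. If `‖T*y‖² ≥ c‖y‖²` for all
`y ∈ dom(T*) ∩ H` with `c > 0`, then every `y ∈ H` is `T x` for some `x` with
`‖x‖² ≤ c⁻¹ ‖y‖²`. -/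
theorem exists_solution_of_adjoint_estimate
    (E F : Type*) [NormedAddCommGroup E] [InnerProductSpace ℝ E] [CompleteSpace E]
    [NormedAddCommGroup F] [InnerProductSpace ℝ F] [CompleteSpace F]
    (T : E →ₗ.[ℝ] F) (hdense : Dense (T.domain : Set E)) (hclosed : T.IsClosed)
    (H : Submodule ℝ F) (hH : IsClosed (H : Set F))
    (hrange : ∀ x : T.domain, T x ∈ H)
    (c : ℝ) (hc : 0 < c)
    (hineq : ∀ y : T.adjoint.domain, (y : F) ∈ H →
      c * ‖(y : F)‖ ^ 2 ≤ ‖T.adjoint y‖ ^ 2) :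
    ∀ y ∈ H, ∃ x : T.domain, T x = y ∧ ‖(x : E)‖ ^ 2 ≤ c⁻¹ * ‖y‖ ^ 2 := by
  intro y hy
  have := hH.completeSpace_coe
  have hsqrt_c : 0 < √c := Real.sqrt_pos.mpr hc
  have hbound (z : T.adjoint.domain) (hz : (z : F) ∈ H) :
      ‖(z : F)‖ ≤ (√c)⁻¹ * ‖T.adjoint z‖ := by
    rw [le_inv_mul_iff₀ hsqrt_c, ← Real.sqrt_sq (norm_nonneg (T.adjoint z)),
      ← Real.sqrt_sq (norm_nonneg (z : F)), ← Real.sqrt_mul hc.le]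
    exact Real.sqrt_le_sqrt (hineq z hz)
  obtain ⟨x, hTx, hx⟩ := LinearPMap.exists_apply_eq_of_norm_le_adjoint hclosed hdense hrange
    (inv_nonneg.mpr hsqrt_c.le) hbound hy
  refine ⟨x, hTx, ?_⟩
  calc ‖(x : E)‖ ^ 2 ≤ ((√c)⁻¹ * ‖y‖) ^ 2 := pow_le_pow_left₀ (norm_nonneg _) hx 2
    _ = c⁻¹ * ‖y‖ ^ 2 := by rw [mul_pow, inv_pow, Real.sq_sqrt hc.le]
end

section
/- Let r > 1 and let φ : ℝⁿ → ℝ be a smooth convex function with φ(ty) = t^r φ(y) for all t ≥ 0 and y ∈ ℝⁿ, such that Hess φ(x) is positive definite for every x ≠ 0 and the gradient map ∇φ : ℝⁿ → ℝⁿ is a homeomorphism restricting to a diffeomorphism of ℝⁿ∖{0} with inverse ψ. Let φ*(y) = sup_{x∈ℝⁿ}(x·y − φ(x)) be the Legendre transform of φ (so on ℝⁿ∖{0}, ∇φ* = ψ and Hess φ*(y) = Dψ(y) = (Hess φ(ψ(y)))⁻¹). Then for every smooth p-form α on ℝⁿ, ∫_{ℝⁿ} |α|²_{Hess φ}(x)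 e^{−φ(x)} dx = ∫_{ℝⁿ} |ψ*α|²_{Hess φ*}(y) e^{−φ*(y)/(r−1)} det(Hess φ*(y)) dy, with both sides possibly equal to +∞. -/
open scoped BigOperators
open MeasureTheory

noncomputable section

/-- A (coefficient) family defining a form on `ℝⁿ`: for each subset `L ⊆ {1,…,n}` a
function on `ℝⁿ` (only the values on `|L| = p` matter for a `p`-form
`β = Σ_{|L|=p} β_L dx_L`). -/
abbrev Coef (n : ℕ) := Finset (Fin n) → (Fin n → ℝ) → ℝ

/-- `IsDistDeriv n p α β` says the `p`-form `α` satisfies `dα = β` in the sense of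
distributions: for every `M` with `|M| = p+1` and every smooth compactly supported test
function `χ`, `∫ β_M χ = −Σ_{i∈M} (−1)^{#{j∈M : j<i}} ∫ α_{M∖{i}} ∂χ/∂x_i`. -/
def IsDistDeriv (n p : ℕ) (α β : Coef n) : Prop :=
  ∀ M : Finset (Fin n), M.card = p + 1 →
    ∀ χ : (Fin n → ℝ) → ℝ, ContDiff ℝ (⊤ : ℕ∞) χ → HasCompactSupport χ →
      (∫ x : Fin n → ℝ, β M x * χ x) =
        -∑ i ∈ M, (-1 : ℝ) ^ (M.filter (· < i)).card *
            ∫ x : Fin n → ℝ, α (M.erase i) x * fderiv ℝ χ x (Pi.single i 1)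

/-- The Hessian matrix `(∂²φ/∂x_i∂x_j)` of `φ : ℝⁿ → ℝ`. -/
def hessM (n : ℕ) (φ : (Fin n → ℝ) → ℝ) (x : Fin n → ℝ) : Matrix (Fin n) (Fin n) ℝ :=
  Matrix.of fun i j => fderiv ℝ (fun y => fderiv ℝ φ y (Pi.single j 1)) x (Pi.single i 1)

/-- The `p×p` minor of a matrix with rows indexed by `L` and columns by `L'`
(both enumerated increasingly); `0` if `L` or `L'` does not have cardinality `p`. -/
def minorDet (n p : ℕ) (M : Matrix (Fin n) (Fin n) ℝ) (L L' : Finset (Fin n)) : ℝ :=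
  if h : L.card = p ∧ L'.card = p then
    Matrix.det (Matrix.of fun i j : Fin p => M (L.orderEmbOfFin h.1 i) (L'.orderEmbOfFin h.2 j))
  else 0

/-- The pointwise squared norm of the `p`-form `β` with respect to the metric `g`:
`|β|²_g(x) = Σ_{L,L'} β_L(x) β_{L'}(x) det[(g(x)⁻¹)_{L,L'}]`. -/
def normSqG (n p : ℕ) (g : (Fin n → ℝ) → Matrix (Fin n) (Fin n) ℝ) (β : Coef n)
    (x : Fin n → ℝ) : ℝ :=
  ∑ L ∈ Finset.univ.filter (fun L : Finset (Fin n) => L.card = p),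
    ∑ L' ∈ Finset.univ.filter (fun L' : Finset (Fin n) => L'.card = p),
      β L x * β L' x * minorDet n p ((g x)⁻¹) L L'

/-- The gradient `∇φ`. -/
def gradV (n : ℕ) (φ : (Fin n → ℝ) → ℝ) (x : Fin n → ℝ) : Fin n → ℝ :=
  fun i => fderiv ℝ φ x (Pi.single i 1)

/-- The Jacobian matrix `(∂ψ_i/∂x_j)` of `ψ : ℝⁿ → ℝⁿ`. -/
def jacM (n : ℕ) (ψ : (Fin n → ℝ) → (Fin n → ℝ)) (x : Fin n → ℝ) :
    Matrix (Fin n) (Fin n) ℝ :=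
  Matrix.of fun i j => fderiv ℝ (fun y => ψ y i) x (Pi.single j 1)

/-- The pullback `ψ*α = Σ_{|L|=p} (α_L∘ψ) dψ_{l_1}∧…∧dψ_{l_p}` of a `p`-form, written in
coordinates: its coefficient on `dx_K` is `Σ_L α_L(ψ x) · det[(∂ψ_{l_i}/∂x_{k_j})]`. -/
def pullb (n p : ℕ) (ψ : (Fin n → ℝ) → (Fin n → ℝ)) (α : Coef n) : Coef n :=
  fun K x =>
    ∑ L ∈ Finset.univ.filter (fun L : Finset (Fin n) => L.card = p),
      α L (ψ x) * minorDet n p (jacM n ψ x) L K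

/-- The Legendre transform `φ*(y) = sup_x (x·y − φ(x))`. -/
def legendre (n : ℕ) (φ : (Fin n → ℝ) → ℝ) (y : Fin n → ℝ) : ℝ :=
  ⨆ x : Fin n → ℝ, (∑ i, x i * y i - φ x)


section AuxCB
open Matrix Finset Equiv Equiv.Perm

lemma cb_aux {p n : ℕ} {A : Matrix (Fin p) (Fin n) ℝ} {B : Matrix (Fin n) (Fin p) ℝ}
    {f : Fin p → Fin n} (H : ¬Function.Injective f) :
    (∑ σ : Equiv.Perm (Fin p), (Equiv.Perm.sign σ : ℝ) * ∏ x, A (σ x) (f x) * B (f x) x) = 0 := by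
  obtain ⟨i, j, hpij, hij⟩ : ∃ i j, f i = f j ∧ i ≠ j := by
    rw [Function.Injective] at H
    push_neg at H
    obtain ⟨i, j, h1, h2⟩ := H
    exact ⟨i, j, h1, h2⟩
  exact
    Finset.sum_involution (fun σ _ => σ * Equiv.swap i j)
      (fun σ _ => by
        have : (∏ x, A (σ x) (f x)) = ∏ x, A ((σ * Equiv.swap i j) x) (f x) :=
          Fintype.prod_equiv (Equiv.swap i j) _ _ (by simp [Equiv.apply_swap_eq_self hpij])
        simp [this, Equiv.Perm.sign_swap hij, -Equiv.Perm.sign_swap', Finset.prod_mul_distrib])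
      (fun σ _ _ => (not_congr Equiv.mul_swap_eq_iff).mpr hij) (fun _ _ => Finset.mem_univ _)
      fun σ _ => Equiv.mul_swap_involutive i j σ

def rsel (p n : ℕ) (A : Matrix (Fin p) (Fin n) ℝ) (K : Finset (Fin n)) : ℝ :=
  if h : K.card = p then (A.submatrix id (K.orderEmbOfFin h)).det else 0

def csel (p n : ℕ) (B : Matrix (Fin n) (Fin p) ℝ) (K : Finset (Fin n)) : ℝ :=
  if h : K.card = p then (B.submatrix (K.orderEmbOfFin h) id).det else 0

lemma cb_inner {p n : ℕ} (A : Matrix (Fin p) (Fin n) ℝ) (B : Matrix (Fin n) (Fin p) ℝ)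
    (K : Finset (Fin n)) (h : K.card = p) :
    ∑ τ : Equiv.Perm (Fin p), ∑ σ : Equiv.Perm (Fin p),
        (Equiv.Perm.sign σ : ℝ)
          * ∏ i, A (σ i) (K.orderEmbOfFin h (τ i)) * B (K.orderEmbOfFin h (τ i)) i
      = rsel p n A K * csel p n B K := by
  set e := K.orderEmbOfFin h with he
  have key : ∀ τ : Equiv.Perm (Fin p),
      (∑ σ : Equiv.Perm (Fin p),
          (Equiv.Perm.sign σ : ℝ) * ∏ i, A (σ i) (e (τ i)) * B (e (τ i)) i)
        = ((Equiv.Perm.sign τ : ℝ) * (A.submatrix id e).det) * ∏ i, B (e (τ i)) i := by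
    intro τ
    have : ∀ σ : Equiv.Perm (Fin p), (∏ i, A (σ i) (e (τ i)) * B (e (τ i)) i)
        = (∏ i, ((A.submatrix id ⇑e).submatrix id ⇑τ) (σ i) i) * ∏ i, B (e (τ i)) i := by
      intro σ
      rw [← Finset.prod_mul_distrib]
      rfl
    simp_rw [this, ← mul_assoc, ← Finset.sum_mul]
    congr 1
    rw [← Matrix.det_apply', Matrix.det_permute' τ]
  simp_rw [key]
  rw [mul_comm (rsel p n A K)]
  have : csel p n B K = ∑ τ : Equiv.Perm (Fin p),
      (Equiv.Perm.sign τ : ℝ) * ∏ i, B (e (τ i)) i := by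
    rw [csel, dif_pos h, Matrix.det_apply']
    rfl
  rw [this, Finset.sum_mul, rsel, dif_pos h]
  refine Finset.sum_congr rfl fun τ _ => by ring

lemma cb_reindex {p n : ℕ} (K : Finset (Fin n)) (h : K.card = p) (T : (Fin p → Fin n) → ℝ) :
    (∑ f ∈ (Finset.univ.filter (fun f : Fin p → Fin n => Function.Injective f)).filter
        (fun f => Finset.image f Finset.univ = K), T f)
    = ∑ τ : Equiv.Perm (Fin p), T (⇑(K.orderEmbOfFin h) ∘ ⇑τ) := by
  have himg : Finset.image (⇑(K.orderEmbOfFin h)) Finset.univ = K := by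
    apply Finset.eq_of_subset_of_card_le
    · intro x hx
      simp only [Finset.mem_image] at hx
      obtain ⟨i, _, rfl⟩ := hx
      exact K.orderEmbOfFin_mem h i
    · rw [h, Finset.card_image_of_injective _ (K.orderEmbOfFin h).injective,
        Finset.card_univ, Fintype.card_fin]
  refine (Finset.sum_bij (fun (τ : Equiv.Perm (Fin p)) _ => ⇑(K.orderEmbOfFin h) ∘ ⇑τ)
    ?_ ?_ ?_ ?_).symm
  · intro τ _
    simp only [Finset.mem_filter, Finset.mem_univ, true_and]
    constructor
    · exact (K.orderEmbOfFin h).injective.comp τ.injective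
    · rw [← Finset.image_image, Finset.image_univ_equiv τ, himg]
  · intro τ1 _ τ2 _ heq
    apply Equiv.coe_fn_injective
    funext i
    exact (K.orderEmbOfFin h).injective (congrFun heq i)
  · intro f hf
    simp only [Finset.mem_filter, Finset.mem_univ, true_and] at hf
    obtain ⟨hinj, himf⟩ := hf
    have hmem : ∀ i, f i ∈ K := by
      intro i
      rw [← himf]
      exact Finset.mem_image_of_mem f (Finset.mem_univ i)
    set g : Fin p → Fin p := fun i => (K.orderIsoOfFin h).symm ⟨f i, hmem i⟩ with hg
    have hginj : Function.Injective g := by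
      intro i j hij
      have h2 : (⟨f i, hmem i⟩ : {x // x ∈ K}) = ⟨f j, hmem j⟩ := by
        have := congrArg (K.orderIsoOfFin h) hij
        simpa [hg] using this
      exact hinj (Subtype.ext_iff.mp h2)
    have hgbij : Function.Bijective g := (Finite.injective_iff_bijective).mp hginj
    refine ⟨Equiv.ofBijective g hgbij, Finset.mem_univ _, ?_⟩
    funext i
    show K.orderEmbOfFin h (g i) = f i
    rw [hg]
    simp only [← Finset.coe_orderIsoOfFin_apply, OrderIso.apply_symm_apply]
  · intros; rfl

theorem cauchyBinet {p n : ℕ} (A : Matrix (Fin p) (Fin n) ℝ) (B : Matrix (Fin n) (Fin p) ℝ) :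
    (A * B).det = ∑ K ∈ Finset.univ.filter (fun K : Finset (Fin n) => K.card = p),
      rsel p n A K * csel p n B K := by
  have step1 : (A * B).det = ∑ f : Fin p → Fin n, ∑ σ : Equiv.Perm (Fin p),
      (Equiv.Perm.sign σ : ℝ) * ∏ i, A (σ i) (f i) * B (f i) i := by
    simp only [Matrix.det_apply', Matrix.mul_apply, Finset.prod_univ_sum, Finset.mul_sum,
      Fintype.piFinset_univ]
    rw [Finset.sum_comm]
  rw [step1]
  have step2 : (∑ f : Fin p → Fin n, ∑ σ : Equiv.Perm (Fin p),
      (Equiv.Perm.sign σ : ℝ) * ∏ i, A (σ i) (f i) * B (f i) i)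
      = ∑ f ∈ Finset.univ.filter (fun f : Fin p → Fin n => Function.Injective f),
          ∑ σ : Equiv.Perm (Fin p), (Equiv.Perm.sign σ : ℝ) * ∏ i, A (σ i) (f i) * B (f i) i := by
    refine (Finset.sum_subset (Finset.filter_subset _ _) fun f _ hinj => cb_aux ?_).symm
    simpa only [true_and, Finset.mem_filter, Finset.mem_univ] using hinj
  rw [step2]
  rw [← Finset.sum_fiberwise_of_maps_to (g := fun f : Fin p → Fin n => Finset.image f Finset.univ)
    (t := Finset.univ.filter (fun K : Finset (Fin n) => K.card = p)) ?_]
  · refine Finset.sum_congr rfl fun K hK => ?_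
    have h : K.card = p := by simpa using (Finset.mem_filter.mp hK).2
    rw [cb_reindex K h]
    exact cb_inner A B K h
  · intro f hf
    simp only [Finset.mem_filter, Finset.mem_univ, true_and] at hf ⊢
    rw [Finset.card_image_of_injective _ hf, Finset.card_univ, Fintype.card_fin]

lemma minorDet_mul {n p : ℕ} (M N : Matrix (Fin n) (Fin n) ℝ) (L L' : Finset (Fin n))
    (hL : L.card = p) (hL' : L'.card = p) :
    minorDet n p (M * N) L L'
      = ∑ K ∈ Finset.univ.filter (fun K : Finset (Fin n) => K.card = p),
          minorDet n p M L K * minorDet n p N K L' := by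
  have key := cauchyBinet (p := p) (n := n)
    (M.submatrix (L.orderEmbOfFin hL) id) (N.submatrix id (L'.orderEmbOfFin hL'))
  have h1 : minorDet n p (M * N) L L'
      = ((M.submatrix (⇑(L.orderEmbOfFin hL)) id)
          * (N.submatrix id (⇑(L'.orderEmbOfFin hL')))).det := by
    rw [minorDet, dif_pos ⟨hL, hL'⟩]
    rfl
  rw [h1, key]
  refine Finset.sum_congr rfl fun K hK => ?_
  have hK' : K.card = p := by simpa using (Finset.mem_filter.mp hK).2
  rw [rsel, dif_pos hK', csel, dif_pos hK', minorDet, dif_pos ⟨hL, hK'⟩, minorDet,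
    dif_pos ⟨hK', hL'⟩]
  rfl

lemma minorDet_transpose {n p : ℕ} (M : Matrix (Fin n) (Fin n) ℝ) (L L' : Finset (Fin n)) :
    minorDet n p Mᵀ L L' = minorDet n p M L' L := by
  unfold minorDet
  by_cases h : L.card = p ∧ L'.card = p
  · rw [dif_pos h, dif_pos ⟨h.2, h.1⟩, ← Matrix.det_transpose]
    rfl
  · rw [dif_neg h, dif_neg (fun h' => h ⟨h'.2, h'.1⟩)]

lemma minor_key {n p : ℕ} (H : Matrix (Fin n) (Fin n) ℝ) (hsym : Hᵀ = H) (hinv : IsUnit H.det)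
    (L L' : Finset (Fin n)) (hL : L.card = p) (hL' : L'.card = p) :
    ∑ K ∈ Finset.univ.filter (fun K : Finset (Fin n) => K.card = p),
      ∑ K' ∈ Finset.univ.filter (fun K' : Finset (Fin n) => K'.card = p),
        minorDet n p H⁻¹ L K * minorDet n p H⁻¹ L' K' * minorDet n p H K K'
      = minorDet n p H⁻¹ L L' := by
  have hsym' : (H⁻¹)ᵀ = H⁻¹ := by rw [Matrix.transpose_nonsing_inv, hsym]
  have hswap : ∀ K' : Finset (Fin n), minorDet n p H⁻¹ L' K' = minorDet n p H⁻¹ K' L' := by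
    intro K'
    rw [← hsym', minorDet_transpose, hsym']
  have step : ∀ K ∈ Finset.univ.filter (fun K : Finset (Fin n) => K.card = p),
      (∑ K' ∈ Finset.univ.filter (fun K' : Finset (Fin n) => K'.card = p),
        minorDet n p H⁻¹ L K * minorDet n p H⁻¹ L' K' * minorDet n p H K K')
      = minorDet n p H⁻¹ L K * minorDet n p 1 K L' := by
    intro K hK
    have hK' : K.card = p := by simpa using (Finset.mem_filter.mp hK).2
    have : ∀ K'' ∈ Finset.univ.filter (fun K'' : Finset (Fin n) => K''.card = p),
        minorDet n p H⁻¹ L K * minorDet n p H⁻¹ L' K'' * minorDet n p H K K''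
        = minorDet n p H⁻¹ L K * (minorDet n p H K K'' * minorDet n p H⁻¹ K'' L') := by
      intro K'' _
      rw [hswap K'']
      ring
    rw [Finset.sum_congr rfl this, ← Finset.mul_sum, ← minorDet_mul H H⁻¹ K L' hK' hL',
      Matrix.mul_nonsing_inv H hinv]
  rw [Finset.sum_congr rfl step, ← minorDet_mul H⁻¹ 1 L L' hL hL', mul_one]

lemma normSq_key {n p : ℕ} (H : Matrix (Fin n) (Fin n) ℝ) (hsym : Hᵀ = H) (hinv : IsUnit H.det)
    (a : Finset (Fin n) → ℝ) :
    ∑ K ∈ Finset.univ.filter (fun K : Finset (Fin n) => K.card = p),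
      ∑ K' ∈ Finset.univ.filter (fun K' : Finset (Fin n) => K'.card = p),
        (∑ L ∈ Finset.univ.filter (fun L : Finset (Fin n) => L.card = p),
            a L * minorDet n p H⁻¹ L K)
        * (∑ L' ∈ Finset.univ.filter (fun L' : Finset (Fin n) => L'.card = p),
            a L' * minorDet n p H⁻¹ L' K')
        * minorDet n p H K K'
      = ∑ L ∈ Finset.univ.filter (fun L : Finset (Fin n) => L.card = p),
          ∑ L' ∈ Finset.univ.filter (fun L' : Finset (Fin n) => L'.card = p),
            a L * a L' * minorDet n p H⁻¹ L L' := by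
  set F := Finset.univ.filter (fun K : Finset (Fin n) => K.card = p) with hF
  have expand : ∀ K ∈ F, ∀ K' ∈ F,
      (∑ L ∈ F, a L * minorDet n p H⁻¹ L K) * (∑ L' ∈ F, a L' * minorDet n p H⁻¹ L' K')
        * minorDet n p H K K'
      = ∑ L ∈ F, ∑ L' ∈ F, a L * a L'
          * (minorDet n p H⁻¹ L K * minorDet n p H⁻¹ L' K' * minorDet n p H K K') := by
    intro K _ K' _
    rw [Finset.sum_mul_sum, Finset.sum_mul]
    refine Finset.sum_congr rfl fun L _ => ?_
    rw [Finset.sum_mul]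
    exact Finset.sum_congr rfl fun L' _ => by ring
  calc ∑ K ∈ F, ∑ K' ∈ F, (∑ L ∈ F, a L * minorDet n p H⁻¹ L K)
        * (∑ L' ∈ F, a L' * minorDet n p H⁻¹ L' K') * minorDet n p H K K'
      = ∑ K ∈ F, ∑ K' ∈ F, ∑ L ∈ F, ∑ L' ∈ F, a L * a L'
          * (minorDet n p H⁻¹ L K * minorDet n p H⁻¹ L' K' * minorDet n p H K K') := by
        refine Finset.sum_congr rfl fun K hK => Finset.sum_congr rfl fun K' hK' => ?_
        exact expand K hK K' hK'
    _ = ∑ K ∈ F, ∑ L ∈ F, ∑ K' ∈ F, ∑ L' ∈ F, a L * a L'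
          * (minorDet n p H⁻¹ L K * minorDet n p H⁻¹ L' K' * minorDet n p H K K') := by
        exact Finset.sum_congr rfl fun K _ => Finset.sum_comm
    _ = ∑ L ∈ F, ∑ K ∈ F, ∑ K' ∈ F, ∑ L' ∈ F, a L * a L'
          * (minorDet n p H⁻¹ L K * minorDet n p H⁻¹ L' K' * minorDet n p H K K') :=
        Finset.sum_comm
    _ = ∑ L ∈ F, ∑ K ∈ F, ∑ L' ∈ F, ∑ K' ∈ F, a L * a L'
          * (minorDet n p H⁻¹ L K * minorDet n p H⁻¹ L' K' * minorDet n p H K K') := by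
        exact Finset.sum_congr rfl fun L _ => Finset.sum_congr rfl fun K _ => Finset.sum_comm
    _ = ∑ L ∈ F, ∑ L' ∈ F, ∑ K ∈ F, ∑ K' ∈ F, a L * a L'
          * (minorDet n p H⁻¹ L K * minorDet n p H⁻¹ L' K' * minorDet n p H K K') := by
        exact Finset.sum_congr rfl fun L _ => Finset.sum_comm
    _ = ∑ L ∈ F, ∑ L' ∈ F, a L * a L' * minorDet n p H⁻¹ L L' := by
        refine Finset.sum_congr rfl fun L hL => Finset.sum_congr rfl fun L' hL' => ?_
        have hLc : L.card = p := by simpa [hF] using (Finset.mem_filter.mp hL).2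
        have hLc' : L'.card = p := by simpa [hF] using (Finset.mem_filter.mp hL').2
        simp_rw [← Finset.mul_sum]
        rw [minor_key H hsym hinv L L' hLc hLc']

end AuxCB

section AuxAnalysis
open Matrix

variable {n : ℕ} {φ : (Fin n → ℝ) → ℝ} {r : ℝ} {ψ : (Fin n → ℝ) → (Fin n → ℝ)}
  {y : Fin n → ℝ}

def hessCLM (n : ℕ) (φ : (Fin n → ℝ) → ℝ) (x : Fin n → ℝ) :
    (Fin n → ℝ) →L[ℝ] (Fin n → ℝ) :=
  ContinuousLinearMap.pi fun i => (fderiv ℝ (fderiv ℝ φ) x).flip (Pi.single i 1)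

lemma diff_fderiv (hφ : ContDiff ℝ (⊤ : ℕ∞) φ) : Differentiable ℝ (fderiv ℝ φ) :=
  (hφ.fderiv_right (m := 1) (by exact WithTop.coe_le_coe.mpr le_top)).differentiable (by simp)

lemma fderiv_grad_comp (hφ : ContDiff ℝ (⊤ : ℕ∞) φ) (x : Fin n → ℝ) (v : Fin n → ℝ) :
    fderiv ℝ (fun y => fderiv ℝ φ y v) x = (fderiv ℝ (fderiv ℝ φ) x).flip v := by
  rw [fderiv_clm_apply (diff_fderiv hφ x) (differentiableAt_const v)]
  simp

lemma hessM_eq (hφ : ContDiff ℝ (⊤ : ℕ∞) φ) (x : Fin n → ℝ) (i j : Fin n) :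
    hessM n φ x i j = fderiv ℝ (fderiv ℝ φ) x (Pi.single i 1) (Pi.single j 1) := by
  show fderiv ℝ (fun y => fderiv ℝ φ y (Pi.single j 1)) x (Pi.single i 1) = _
  rw [fderiv_grad_comp hφ]
  rfl

lemma hessM_symm (hφ : ContDiff ℝ (⊤ : ℕ∞) φ) (x : Fin n → ℝ) :
    (hessM n φ x)ᵀ = hessM n φ x := by
  ext i j
  show hessM n φ x j i = hessM n φ x i j
  rw [hessM_eq hφ, hessM_eq hφ]
  exact second_derivative_symmetric
    (fun y => ((hφ.differentiable (by simp)) y).hasFDerivAt)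
    ((diff_fderiv hφ x).hasFDerivAt) _ _

lemma hasFDerivAt_gradV (hφ : ContDiff ℝ (⊤ : ℕ∞) φ) (x : Fin n → ℝ) :
    HasFDerivAt (gradV n φ) (hessCLM n φ x) x := by
  rw [hessCLM, hasFDerivAt_pi]
  intro i
  have := ((diff_fderiv hφ x).hasFDerivAt).clm_apply
    (hasFDerivAt_const (Pi.single i (1:ℝ)) x)
  simpa [gradV] using this

lemma hessCLM_apply (hφ : ContDiff ℝ (⊤ : ℕ∞) φ) (x v : Fin n → ℝ) :
    hessCLM n φ x v = (hessM n φ x)ᵀ.mulVec v := by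
  funext i
  show fderiv ℝ (fderiv ℝ φ) x v (Pi.single i 1) = _
  conv_lhs => rw [pi_eq_sum_univ v]
  simp only [map_sum, ContinuousLinearMap.coe_sum', Finset.sum_apply]
  simp only [Matrix.mulVec, dotProduct, Matrix.transpose_apply]
  refine Finset.sum_congr rfl fun j _ => ?_
  have hsingle : (fun j1 => if j = j1 then (1:ℝ) else 0) = Pi.single j 1 :=
    funext fun k => by simp [Pi.single_apply, eq_comm]
  rw [hsingle, _root_.map_smul]
  beta_reduce
  rw [hessM_eq hφ]
  simp [mul_comm]

lemma hessCLM_det (hφ : ContDiff ℝ (⊤ : ℕ∞) φ) (x : Fin n → ℝ) :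
    (hessCLM n φ x).det = (hessM n φ x).det := by
  have h1 : (hessCLM n φ x : (Fin n → ℝ) →ₗ[ℝ] (Fin n → ℝ))
      = Matrix.toLin' (hessM n φ x)ᵀ := by
    apply LinearMap.ext
    intro v
    rw [Matrix.toLin'_apply]
    exact hessCLM_apply hφ x v
  rw [ContinuousLinearMap.det, h1, LinearMap.det_toLin', Matrix.det_transpose]

lemma clm_pi_apply (f : (Fin n → ℝ) →L[ℝ] ℝ) (w : Fin n → ℝ) :
    f w = ∑ i, w i * f (Pi.single i 1) := by
  conv_lhs => rw [pi_eq_sum_univ w]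
  rw [map_sum]
  refine Finset.sum_congr rfl fun j _ => ?_
  have hsingle : (fun j1 => if j = j1 then (1:ℝ) else 0) = Pi.single j 1 :=
    funext fun k => by simp [Pi.single_apply, eq_comm]
  rw [hsingle, _root_.map_smul, smul_eq_mul]

lemma hasDerivAt_line (hφ : ContDiff ℝ (⊤ : ℕ∞) φ) (x v : Fin n → ℝ) (t : ℝ) :
    HasDerivAt (fun s : ℝ => φ (x + s • v)) (fderiv ℝ φ (x + t • v) v) t := by
  have h1 : HasDerivAt (fun s : ℝ => x + s • v) v t := by
    simpa using ((hasDerivAt_id t).smul_const v).const_add x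
  exact (((hφ.differentiable (by simp)) _).hasFDerivAt).comp_hasDerivAt t h1

lemma euler_fderiv (hφ : ContDiff ℝ (⊤ : ℕ∞) φ) (hr : 1 < r)
    (hhom : ∀ t : ℝ, 0 ≤ t → ∀ y : Fin n → ℝ, φ (t • y) = t ^ r * φ y) (x : Fin n → ℝ) :
    fderiv ℝ φ x x = r * φ x := by
  have h1 : HasDerivAt (fun t : ℝ => φ (t • x)) (fderiv ℝ φ x x) 1 := by
    have := hasDerivAt_line hφ 0 x 1
    simpa using this
  have h2 : HasDerivAt (fun t : ℝ => t ^ r * φ x) (r * φ x) 1 := by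
    have := (Real.hasDerivAt_rpow_const (x := (1:ℝ)) (p := r)
      (Or.inl one_ne_zero)).mul_const (φ x)
    simpa [Real.one_rpow] using this
  have heq : (fun t : ℝ => t ^ r * φ x) =ᶠ[nhds 1] (fun t : ℝ => φ (t • x)) := by
    filter_upwards [Ioi_mem_nhds (by norm_num : (0:ℝ) < 1)] with t ht
    exact (hhom t (le_of_lt ht) x).symm
  exact (h1.congr_of_eventuallyEq heq).unique h2

lemma gradV_zero (hφ : ContDiff ℝ (⊤ : ℕ∞) φ) (hr : 1 < r)
    (hhom : ∀ t : ℝ, 0 ≤ t → ∀ y : Fin n → ℝ, φ (t • y) = t ^ r * φ y) :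
    gradV n φ 0 = 0 := by
  funext i
  show fderiv ℝ φ 0 (Pi.single i 1) = 0
  set v : Fin n → ℝ := Pi.single i 1 with hv
  have h1 : HasDerivAt (fun t : ℝ => φ (t • v)) (fderiv ℝ φ 0 v) 0 := by
    have := hasDerivAt_line hφ 0 v 0
    simpa using this
  have h2 : HasDerivAt (fun t : ℝ => t ^ r * φ v) 0 0 := by
    have := (Real.hasDerivAt_rpow_const (x := (0:ℝ)) (p := r) (Or.inr hr.le)).mul_const (φ v)
    simpa [Real.zero_rpow (by nlinarith : r - 1 ≠ 0)] using this
  have e1 : HasDerivWithinAt (fun t : ℝ => φ (t • v)) (fderiv ℝ φ 0 v) (Set.Ici 0) 0 :=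
    h1.hasDerivWithinAt
  have e2 : HasDerivWithinAt (fun t : ℝ => φ (t • v)) 0 (Set.Ici 0) 0 :=
    (h2.hasDerivWithinAt).congr (fun t ht => hhom t ht v) (by
      have := hhom 0 le_rfl v
      simpa [Real.zero_rpow (by positivity : r ≠ 0)] using this)
  have hu : UniqueDiffWithinAt ℝ (Set.Ici (0:ℝ)) 0 :=
    uniqueDiffOn_Ici 0 0 Set.self_mem_Ici
  rw [← e1.derivWithin hu, e2.derivWithin hu]

lemma grad_ineq (hφ : ContDiff ℝ (⊤ : ℕ∞) φ) (hconv : ConvexOn ℝ Set.univ φ) (x z : Fin n → ℝ) :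
    fderiv ℝ φ x (z - x) ≤ φ z - φ x := by
  set g : ℝ → ℝ := fun t => φ (x + t • (z - x)) with hg
  have hgd : HasDerivAt g (fderiv ℝ φ x (z - x)) 0 := by
    have := hasDerivAt_line hφ x (z - x) 0
    simpa using this
  have hcv : ConvexOn ℝ Set.univ g := by
    have h := hconv.comp_affineMap (AffineMap.lineMap x z)
    have hfun : (φ ∘ (AffineMap.lineMap x z)) = g := by
      funext t
      simp only [Function.comp_apply, AffineMap.lineMap_apply, vsub_eq_sub, vadd_eq_add, hg]
      congr 1
      module
    rw [hfun] at h
    simpa using h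
  have hs := hcv.le_slope_of_hasDerivAt (Set.mem_univ (0:ℝ)) (Set.mem_univ (1:ℝ))
    zero_lt_one hgd
  have : slope g 0 1 = φ z - φ x := by
    simp [slope, hg]
  linarith [hs, this.le, this.ge]

lemma legendre_grad (hφ : ContDiff ℝ (⊤ : ℕ∞) φ) (hconv : ConvexOn ℝ Set.univ φ) (hr : 1 < r)
    (hhom : ∀ t : ℝ, 0 ≤ t → ∀ y : Fin n → ℝ, φ (t • y) = t ^ r * φ y) (x : Fin n → ℝ) :
    legendre n φ (gradV n φ x) = (r - 1) * φ x := by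
  set y := gradV n φ x with hy
  have hlin : ∀ w : Fin n → ℝ, fderiv ℝ φ x w = ∑ i, w i * y i := fun w =>
    clm_pi_apply (fderiv ℝ φ x) w
  have heuler : ∑ i, x i * y i = r * φ x := by
    rw [← hlin x]
    exact euler_fderiv hφ hr hhom x
  have hub : ∀ z : Fin n → ℝ, (∑ i, z i * y i) - φ z ≤ (r - 1) * φ x := by
    intro z
    have h1 := grad_ineq hφ hconv x z
    rw [hlin (z - x)] at h1
    have h2 : ∑ i, (z - x) i * y i = (∑ i, z i * y i) - ∑ i, x i * y i := by
      rw [← Finset.sum_sub_distrib]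
      refine Finset.sum_congr rfl fun i _ => by simp [sub_mul]
    rw [h2, heuler] at h1
    linarith
  apply le_antisymm
  · exact ciSup_le hub
  · have hbdd : BddAbove (Set.range fun z : Fin n → ℝ => (∑ i, z i * y i) - φ z) :=
      ⟨(r - 1) * φ x, by rintro _ ⟨z, rfl⟩; exact hub z⟩
    have := le_ciSup hbdd x
    rw [heuler] at this
    calc (r - 1) * φ x = r * φ x - φ x := by ring
    _ ≤ _ := this

lemma clm_pi_apply' {M : Type*} [NormedAddCommGroup M] [NormedSpace ℝ M]
    (f : (Fin n → ℝ) →L[ℝ] M) (w : Fin n → ℝ) :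
    f w = ∑ i, w i • f (Pi.single i 1) := by
  conv_lhs => rw [pi_eq_sum_univ w]
  rw [map_sum]
  refine Finset.sum_congr rfl fun j _ => ?_
  have hsingle : (fun j1 => if j = j1 then (1:ℝ) else 0) = Pi.single j 1 :=
    funext fun k => by simp [Pi.single_apply, eq_comm]
  rw [hsingle, _root_.map_smul]

lemma fderiv_psi_apply (hψd : DifferentiableAt ℝ ψ y) (v : Fin n → ℝ) :
    fderiv ℝ ψ y v = (jacM n ψ y).mulVec v := by
  have hcomp : ∀ i, fderiv ℝ (fun x => ψ x i) y
      = (ContinuousLinearMap.proj i).comp (fderiv ℝ ψ y) := by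
    intro i
    exact ((hasFDerivAt_pi'.1 hψd.hasFDerivAt) i).fderiv
  funext i
  rw [clm_pi_apply' (fderiv ℝ ψ y) v]
  simp only [Matrix.mulVec, dotProduct, jacM, Matrix.of_apply, hcomp]
  simp only [Finset.sum_apply, Pi.smul_apply, smul_eq_mul,
    ContinuousLinearMap.coe_comp', Function.comp_apply, ContinuousLinearMap.proj_apply]
  exact Finset.sum_congr rfl fun j _ => mul_comm _ _

lemma hess_mul_jac (hφ : ContDiff ℝ (⊤ : ℕ∞) φ)
    (hrinv : Function.RightInverse ψ (gradV n φ))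
    (hψd : DifferentiableAt ℝ ψ y) :
    (hessM n φ (ψ y))ᵀ * jacM n ψ y = 1 := by
  have hid : HasFDerivAt (gradV n φ ∘ ψ)
      ((hessCLM n φ (ψ y)).comp (fderiv ℝ ψ y)) y :=
    (hasFDerivAt_gradV hφ (ψ y)).comp y hψd.hasFDerivAt
  have hid2 : HasFDerivAt (gradV n φ ∘ ψ) (ContinuousLinearMap.id ℝ (Fin n → ℝ)) y := by
    have : gradV n φ ∘ ψ = id := funext fun z => hrinv z
    rw [this]
    exact hasFDerivAt_id y
  have huniq := hid.unique hid2
  ext i j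
  have := congrFun (congrArg (fun (L : (Fin n → ℝ) →L[ℝ] (Fin n → ℝ)) => L (Pi.single j 1))
    huniq) i
  simp only [ContinuousLinearMap.coe_comp', Function.comp_apply,
    ContinuousLinearMap.coe_id', id_eq] at this
  rw [fderiv_psi_apply hψd, hessCLM_apply hφ] at this
  rw [Matrix.mulVec_mulVec] at this
  rw [Matrix.mulVec_single] at this
  simp only [MulOpposite.op_one, one_smul, Matrix.col_apply, Pi.smul_apply] at this
  rw [this, Matrix.one_apply, Pi.single_apply]

lemma jacM_eq (hφ : ContDiff ℝ (⊤ : ℕ∞) φ)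
    (hrinv : Function.RightInverse ψ (gradV n φ))
    (hψd : DifferentiableAt ℝ ψ y) :
    jacM n ψ y = (hessM n φ (ψ y))⁻¹ := by
  have h := hess_mul_jac hφ hrinv hψd
  rw [hessM_symm hφ] at h
  exact (Matrix.inv_eq_right_inv h).symm

lemma pointwise_key {p : ℕ} (hφ : ContDiff ℝ (⊤ : ℕ∞) φ)
    (hpos : ∀ x : Fin n → ℝ, x ≠ 0 → (hessM n φ x).PosDef)
    (hrinv : Function.RightInverse ψ (gradV n φ))
    (hψs : ContDiffOn ℝ (⊤ : ℕ∞) ψ {(0 : Fin n → ℝ)}ᶜ)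
    (α : Coef n) (hy : y ≠ 0) (hψy : ψ y ≠ 0) :
    normSqG n p (fun z => (hessM n φ (ψ z))⁻¹) (pullb n p ψ α) y
      = normSqG n p (hessM n φ) α (ψ y) := by
  have hψd : DifferentiableAt ℝ ψ y :=
    (hψs.contDiffAt (IsOpen.mem_nhds isOpen_compl_singleton hy)).differentiableAt (by simp)
  have hpd := hpos (ψ y) hψy
  have hdet : 0 < (hessM n φ (ψ y)).det := hpd.det_pos
  have hu : IsUnit (hessM n φ (ψ y)).det := isUnit_iff_ne_zero.mpr hdet.ne'
  have hjac : jacM n ψ y = (hessM n φ (ψ y))⁻¹ := jacM_eq hφ hrinv hψd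
  simp only [normSqG, pullb, hjac, Matrix.nonsing_inv_nonsing_inv _ hu]
  exact normSq_key (hessM n φ (ψ y)) (hessM_symm hφ _) hu (fun L => α L (ψ y))

end AuxAnalysis

/-- let `r > 1` and `φ` be a smooth convex `r`-homogeneous function
(`φ(ty) = t^r φ(y)` for `t ≥ 0`) with `Hess φ(x)` positive definite for `x ≠ 0`, whose
gradient map is a homeomorphism restricting to a diffeomorphism of `ℝⁿ∖{0}` with
inverse `ψ`. With `φ*` the Legendre transform (so `Hess φ*(y) = (Hess φ(ψ(y)))⁻¹` off
`0`), for every smooth `p`-form `α`,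
`∫ |α|²_{Hess φ} e^{−φ} dx = ∫ |ψ*α|²_{Hess φ*} e^{−φ*/(r−1)} det(Hess φ*) dy`,
both sides possibly `+∞` (hence stated as an equality of Lebesgue integrals in
`[0,∞]`). -/
theorem legendre_change_of_variables (n : ℕ) (hn : 1 ≤ n)
    (r : ℝ) (hr : 1 < r)
    (φ : (Fin n → ℝ) → ℝ) (hφ : ContDiff ℝ (⊤ : ℕ∞) φ) (hconv : ConvexOn ℝ Set.univ φ)
    (hhom : ∀ t : ℝ, 0 ≤ t → ∀ y : Fin n → ℝ, φ (t • y) = t ^ r * φ y)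
    (hpos : ∀ x : Fin n → ℝ, x ≠ 0 → (hessM n φ x).PosDef)
    (ψ : (Fin n → ℝ) → (Fin n → ℝ)) (hψc : Continuous ψ)
    (hlinv : Function.LeftInverse ψ (gradV n φ))
    (hrinv : Function.RightInverse ψ (gradV n φ))
    (hψs : ContDiffOn ℝ (⊤ : ℕ∞) ψ {(0 : Fin n → ℝ)}ᶜ)
    (p : ℕ) (α : Coef n)
    (hα : ∀ L : Finset (Fin n), L.card = p → ContDiff ℝ (⊤ : ℕ∞) (α L)) :
    (∫⁻ x : Fin n → ℝ,
        ENNReal.ofReal (normSqG n p (hessM n φ) α x * Real.exp (-φ x)))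
      = ∫⁻ y : Fin n → ℝ,
          ENNReal.ofReal
            (normSqG n p (fun z => (hessM n φ (ψ z))⁻¹) (pullb n p ψ α) y
              * Real.exp (-(legendre n φ y) / (r - 1))
              * ((hessM n φ (ψ y))⁻¹).det) := by
  classical
  haveI : Nonempty (Fin n) := ⟨⟨0, hn⟩⟩
  have hgrad0 : gradV n φ 0 = 0 := gradV_zero hφ hr hhom
  set s : Set (Fin n → ℝ) := {(0 : Fin n → ℝ)}ᶜ with hs
  have hsm : MeasurableSet s := (measurableSet_singleton 0).compl
  have h0 : (volume : Measure (Fin n → ℝ)) {0} = 0 := measure_singleton 0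
  have hres : (volume : Measure (Fin n → ℝ)).restrict s = volume := by
    apply Measure.restrict_eq_self_of_ae_mem
    rw [MeasureTheory.ae_iff]
    convert h0 using 2
    ext z
    simp [hs]
  set G : (Fin n → ℝ) → ENNReal := fun y => ENNReal.ofReal
      (normSqG n p (fun z => (hessM n φ (ψ z))⁻¹) (pullb n p ψ α) y
        * Real.exp (-(legendre n φ y) / (r - 1)) * ((hessM n φ (ψ y))⁻¹).det) with hG
  have hinj : Set.InjOn (gradV n φ) s := fun a _ b _ h => hlinv.injective h
  have hf' : ∀ x ∈ s, HasFDerivWithinAt (gradV n φ) (hessCLM n φ x) s x := fun x _ =>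
    (hasFDerivAt_gradV hφ x).hasFDerivWithinAt
  have cov := lintegral_image_eq_lintegral_abs_det_fderiv_mul volume hsm hf' hinj G
  have himg : gradV n φ '' s = s := by
    have hbij : Function.Bijective (gradV n φ) := ⟨hlinv.injective, hrinv.surjective⟩
    rw [hs, Set.image_compl_eq hbij, Set.image_singleton, hgrad0]
  rw [himg] at cov
  have point : ∀ x ∈ s, ENNReal.ofReal |(hessCLM n φ x).det| * G (gradV n φ x)
      = ENNReal.ofReal (normSqG n p (hessM n φ) α x * Real.exp (-φ x)) := by
    intro x hx
    have hx0 : x ≠ 0 := hx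
    have hψ0 : ψ 0 = 0 := by
      have := hlinv 0
      rwa [hgrad0] at this
    have hy0 : gradV n φ x ≠ 0 := by
      intro h
      have hx' : x = ψ 0 := by rw [← hlinv x, h]
      exact hx0 (hx'.trans hψ0)
    have hψx : ψ (gradV n φ x) = x := hlinv x
    have hpd := hpos x hx0
    have hdet : 0 < (hessM n φ x).det := hpd.det_pos
    have hleg : legendre n φ (gradV n φ x) = (r - 1) * φ x := legendre_grad hφ hconv hr hhom x
    have hnorm : normSqG n p (fun z => (hessM n φ (ψ z))⁻¹) (pullb n p ψ α) (gradV n φ x)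
        = normSqG n p (hessM n φ) α x := by
      have := pointwise_key (p := p) hφ hpos hrinv hψs α hy0 (by rw [hψx]; exact hx0)
      rwa [hψx] at this
    rw [hG]
    simp only
    rw [hψx, hleg, hnorm, hessCLM_det hφ, abs_of_pos hdet, Matrix.det_nonsing_inv,
      Ring.inverse_eq_inv']
    have hexp : -((r - 1) * φ x) / (r - 1) = -φ x := by
      have h1 : r - 1 ≠ 0 := by nlinarith
      rw [neg_div, mul_comm, mul_div_assoc, div_self h1, mul_one]
    rw [hexp, ← ENNReal.ofReal_mul hdet.le]
    congr 1
    have hd : (hessM n φ x).det ≠ 0 := hdet.ne'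
    rw [mul_comm, mul_assoc, inv_mul_cancel₀ hd, mul_one]
  calc (∫⁻ x : Fin n → ℝ,
        ENNReal.ofReal (normSqG n p (hessM n φ) α x * Real.exp (-φ x)))
      = ∫⁻ x in s, ENNReal.ofReal (normSqG n p (hessM n φ) α x * Real.exp (-φ x)) := by
        rw [hres]
    _ = ∫⁻ x in s, ENNReal.ofReal |(hessCLM n φ x).det| * G (gradV n φ x) :=
        (setLIntegral_congr_fun hsm point).symm
    _ = ∫⁻ y in s, G y := cov.symm
    _ = ∫⁻ y, G y := by rw [hres]
end
end
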